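/- arXiv:0909.2129 — 6 statements merged into one kernel-verified Lean document; each statement's English description precedes it below -/
import Mathlib

section
/- Let F be a polyhedral fan in R^n, C a cone of F, ω a point in the relative interior of C, and (ω_i) a sequence of points of the support of F, none lying in C, converging to ω. Then there exists a cone D of F containing a subsequence of (ω_i) such that C is a proper face of D. -/
/-- A polyhedral (finitely generated) cone in `ℝⁿ`. -/
def IsPolyCone {n : ℕ} (C : Set (EuclideanSpace ℝ (Fin n))) : Prop :=
  ∃ (m : ℕ) (v : Fin m → EuclideanSpace ℝ (Fin n)),
    C = {x | ∃ c : Fin m → ℝ, (∀ i, 0 ≤ c i) ∧ x = ∑ i, c i • v i}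

/-- `F` is a face of the cone `C` (cut out by a supporting linear functional,
or `C` itself). -/
def IsFaceOf {n : ℕ} (F C : Set (EuclideanSpace ℝ (Fin n))) : Prop :=
  F = C ∨ ∃ l : EuclideanSpace ℝ (Fin n) →ₗ[ℝ] ℝ,
    (∀ x ∈ C, l x ≤ 0) ∧ F = {x ∈ C | l x = 0}

/-- A polyhedral fan in `ℝⁿ`: a finite collection of polyhedral cones, closed
under taking faces, such that any two cones intersect in a common face. -/
structure PolyFan (n : ℕ) where
  cones : Set (Set (EuclideanSpace ℝ (Fin n)))
  finite : cones.Finite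
  poly : ∀ C ∈ cones, IsPolyCone C
  faces_mem : ∀ C ∈ cones, ∀ F, IsFaceOf F C → F ∈ cones
  inter_face : ∀ C ∈ cones, ∀ D ∈ cones, IsFaceOf (C ∩ D) C

/-- The support of a fan: the union of its cones. -/
def PolyFan.support {n : ℕ} (F : PolyFan n) : Set (EuclideanSpace ℝ (Fin n)) :=
  ⋃ C ∈ F.cones, C

/-- The dimension of a cone: the dimension of its affine hull. -/
noncomputable def coneDim {n : ℕ} (C : Set (EuclideanSpace ℝ (Fin n))) : ℕ :=
  Module.finrank ℝ (affineSpan ℝ C).direction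

/-- The relative interior of a set. -/
def relint {n : ℕ} (C : Set (EuclideanSpace ℝ (Fin n))) : Set (EuclideanSpace ℝ (Fin n)) :=
  intrinsicInterior ℝ C

/-- A maximal cone of a fan. -/
def PolyFan.IsMaximal {n : ℕ} (F : PolyFan n) (C : Set (EuclideanSpace ℝ (Fin n))) : Prop :=
  C ∈ F.cones ∧ ∀ D ∈ F.cones, C ⊆ D → D = C

/-!
A cone `D` of the fan contains infinitely many of the `ωᵢ`, since there are finitely many
cones. Polyhedral cones are closed (conic Carathéodory reduces them to finitely many
linearly independent, hence closed, cones), so `ω ∈ D`. Then `C ∩ D` is a face of `C`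
meeting the relative interior of `C`, which forces `C ∩ D = C`, i.e. `C ⊆ D`, and so
`C = C ∩ D` is a face of `D`; it is proper because `D` contains points `ωᵢ ∉ C`.
-/

open Filter Topology

section Caratheodory

variable {𝕜 E ι : Type*} [Field 𝕜] [LinearOrder 𝕜] [IsStrictOrderedRing 𝕜]
  [AddCommGroup E] [Module 𝕜 E]

theorem exists_pos_of_not_linearIndepOn {v : ι → E} {s : Finset ι}
    (hs : ¬LinearIndepOn 𝕜 v s) :
    ∃ g : ι → 𝕜, ∑ i ∈ s, g i • v i = 0 ∧ ∃ i ∈ s, 0 < g i := by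
  obtain ⟨g, hg, j, hj, hgj⟩ := not_linearIndepOn_finset_iff.mp hs
  rcases hgj.lt_or_gt with hneg | hpos
  · exact ⟨-g, by simp [neg_smul, hg], j, hj, by simpa using hneg⟩
  · exact ⟨g, hg, j, hj, hpos⟩

/-- Conic Carathéodory theorem. -/
theorem exists_linearIndepOn_nonneg_sum_eq (v : ι → E) (s : Finset ι) (c : ι → 𝕜)
    (hc : ∀ i ∈ s, 0 ≤ c i) :
    ∃ t ⊆ s, LinearIndepOn 𝕜 v t ∧
      ∃ c' : ι → 𝕜, (∀ i ∈ t, 0 ≤ c' i) ∧ ∑ i ∈ t, c' i • v i = ∑ i ∈ s, c i • v i := by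
  classical
  induction s using Finset.strongInduction generalizing c with
  | H s ih =>
  by_cases hs : LinearIndepOn 𝕜 v s
  · exact ⟨s, subset_rfl, hs, c, hc, rfl⟩
  obtain ⟨g, hg, j, hj, hgj⟩ := exists_pos_of_not_linearIndepOn hs
  -- Move along `-g` until the first coefficient hits zero.
  obtain ⟨i₀, hi₀, hmin⟩ := (s.filter (0 < g ·)).exists_min_image (fun i ↦ c i / g i)
    ⟨j, Finset.mem_filter.mpr ⟨hj, hgj⟩⟩
  obtain ⟨hi₀s, hgi₀⟩ := Finset.mem_filter.mp hi₀
  set r := c i₀ / g i₀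
  have hr : 0 ≤ r := div_nonneg (hc i₀ hi₀s) hgi₀.le
  have hc'_nonneg : ∀ i ∈ s, 0 ≤ c i - r * g i := by
    intro i hi
    rcases lt_or_ge 0 (g i) with hgi | hgi
    · have := hmin i (Finset.mem_filter.mpr ⟨hi, hgi⟩)
      rw [le_div_iff₀ hgi] at this
      linarith
    · nlinarith [hc i hi]
  have hc'_i₀ : c i₀ - r * g i₀ = 0 := by
    rw [div_mul_cancel₀ _ hgi₀.ne', sub_self]
  have hsum : ∑ i ∈ s.erase i₀, (c i - r * g i) • v i = ∑ i ∈ s, c i • v i := by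
    rw [Finset.sum_erase _ (by rw [hc'_i₀, zero_smul])]
    simp only [sub_smul, mul_smul, Finset.sum_sub_distrib, ← Finset.smul_sum, hg, smul_zero,
      sub_zero]
  obtain ⟨t, hts, ht, c', hc', hsum'⟩ := ih _ (Finset.erase_ssubset hi₀s) _
    fun i hi ↦ hc'_nonneg i (Finset.mem_of_mem_erase hi)
  exact ⟨t, hts.trans (s.erase_subset i₀), ht, c', hc', hsum'.trans hsum⟩

end Caratheodory

theorem isClosed_nonneg_sum_of_linearIndepOn {ι E : Type*} [NormedAddCommGroup E]
    [NormedSpace ℝ E] {v : ι → E} {t : Finset ι} (ht : LinearIndepOn ℝ v t) :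
    IsClosed {x | ∃ c : ι → ℝ, (∀ i ∈ t, 0 ≤ c i) ∧ x = ∑ i ∈ t, c i • v i} := by
  classical
  set L := Fintype.linearCombination ℝ (fun i : t ↦ v i)
  have hL : IsClosedEmbedding L :=
    L.isClosedEmbedding_of_injective (LinearMap.ker_eq_bot.mpr ht.fintypeLinearCombination_injective)
  have himage : {x | ∃ c : ι → ℝ, (∀ i ∈ t, 0 ≤ c i) ∧ x = ∑ i ∈ t, c i • v i} =
      L '' Set.Ici 0 := by
    ext x
    simp only [Set.mem_ofPred_eq, Set.mem_image, Set.mem_Ici, L, Fintype.linearCombination_apply]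
    constructor
    · rintro ⟨c, hc, rfl⟩
      exact ⟨fun i ↦ c i, fun i ↦ hc i i.2, (t.sum_coe_sort fun i ↦ c i • v i)⟩
    · rintro ⟨c, hc, rfl⟩
      refine ⟨fun i ↦ if h : i ∈ t then c ⟨i, h⟩ else 0, fun i hi ↦ by simpa [hi] using hc ⟨i, hi⟩, ?_⟩
      rw [← t.sum_coe_sort]
      exact Finset.sum_congr rfl fun i _ ↦ by simp [i.2]
  rw [himage]
  exact hL.isClosedMap _ isClosed_Ici

theorem IsPolyCone.isClosed {n : ℕ} {C : Set (EuclideanSpace ℝ (Fin n))} (hC : IsPolyCone C) :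
    IsClosed C := by
  classical
  obtain ⟨m, v, rfl⟩ := hC
  have hunion : {x | ∃ c : Fin m → ℝ, (∀ i, 0 ≤ c i) ∧ x = ∑ i, c i • v i} =
      ⋃ t ∈ {t : Finset (Fin m) | LinearIndepOn ℝ v t},
        {x | ∃ c : Fin m → ℝ, (∀ i ∈ t, 0 ≤ c i) ∧ x = ∑ i ∈ t, c i • v i} := by
    ext x
    simp only [Set.mem_ofPred_eq, Set.mem_iUnion, exists_prop]
    constructor
    · rintro ⟨c, hc, rfl⟩
      obtain ⟨t, -, ht, c', hc', hsum⟩ :=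
        exists_linearIndepOn_nonneg_sum_eq v Finset.univ c fun i _ ↦ hc i
      exact ⟨t, ht, c', hc', hsum.symm⟩
    · rintro ⟨t, -, c, hc, rfl⟩
      refine ⟨fun i ↦ if i ∈ t then c i else 0, fun i ↦ ?_, by simp [ite_smul]⟩
      by_cases hi : i ∈ t <;> simp [hi, hc]
  rw [hunion]
  exact (Set.toFinite _).isClosed_biUnion fun t ht ↦ isClosed_nonneg_sum_of_linearIndepOn ht

theorem eq_zero_of_nonpos_of_mem_intrinsicInterior {E : Type*} [NormedAddCommGroup E]
    [NormedSpace ℝ E] {C : Set E} {l : E →ₗ[ℝ] ℝ} (hl : ∀ x ∈ C, l x ≤ 0) {ω : E}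
    (hω : ω ∈ intrinsicInterior ℝ C) (hlω : l ω = 0) {x : E} (hx : x ∈ C) : l x = 0 := by
  obtain ⟨ω', hω', rfl⟩ := mem_intrinsicInterior.mp hω
  -- Points `ω + t (ω - x)` with small `t > 0` stay in `C`.
  have hline : ∀ t : ℝ, t • ((ω' : E) - x) + ω' ∈ affineSpan ℝ C := fun t ↦ by
    simpa using AffineSubspace.smul_vsub_vadd_mem _ t ω'.2 (subset_affineSpan ℝ C hx) ω'.2
  have hcont : Continuous fun t : ℝ ↦ (⟨_, hline t⟩ : affineSpan ℝ C) := by fun_prop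
  have hnear : ∀ᶠ t in 𝓝 (0 : ℝ), t • ((ω' : E) - x) + ω' ∈ C := by
    have := hcont.tendsto 0
    simp only [zero_smul, zero_add, Subtype.coe_eta] at this
    exact this (mem_interior_iff_mem_nhds.mp hω')
  obtain ⟨t, hyC, ht⟩ :=
    ((hnear.filter_mono nhdsWithin_le_nhds).and (self_mem_nhdsWithin (s := Set.Ioi 0))).exists
  have := hl _ hyC
  simp only [map_add, map_smul, map_sub, hlω, smul_eq_mul] at this
  nlinarith [hl x hx]

theorem IsFaceOf.eq_of_mem_relint {n : ℕ} {G C : Set (EuclideanSpace ℝ (Fin n))}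
    (hG : IsFaceOf G C) {ω : EuclideanSpace ℝ (Fin n)} (hω : ω ∈ relint C) (hωG : ω ∈ G) :
    G = C := by
  rcases hG with rfl | ⟨l, hl, rfl⟩
  · rfl
  exact Set.Subset.antisymm (Set.sep_subset _ _)
    fun x hx ↦ ⟨hx, eq_zero_of_nonpos_of_mem_intrinsicInterior hl hω hωG.2 hx⟩

namespace PolyFan

variable {n : ℕ} (F : PolyFan n)

theorem exists_frequently_mem {α : Type*} {l : Filter α} [l.NeBot]
    {u : α → EuclideanSpace ℝ (Fin n)} (hu : ∀ i, u i ∈ F.support) :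
    ∃ D ∈ F.cones, ∃ᶠ i in l, u i ∈ D := by
  by_contra! h
  obtain ⟨i, hi⟩ := (F.finite.eventually_all.mpr h).exists
  obtain ⟨D, hD, hiD⟩ := Set.mem_iUnion₂.mp (hu i)
  exact hi D hD hiD

theorem subset_of_mem_relint {C D : Set (EuclideanSpace ℝ (Fin n))} (hC : C ∈ F.cones)
    (hD : D ∈ F.cones) {ω : EuclideanSpace ℝ (Fin n)} (hω : ω ∈ relint C) (hωD : ω ∈ D) :
    C ⊆ D :=
  Set.inter_eq_left.mp <|
    (F.inter_face C hC D hD).eq_of_mem_relint hω ⟨intrinsicInterior_subset hω, hωD⟩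

theorem isFaceOf_of_subset {C D : Set (EuclideanSpace ℝ (Fin n))} (hC : C ∈ F.cones)
    (hD : D ∈ F.cones) (hCD : C ⊆ D) : IsFaceOf C D := by
  simpa [Set.inter_eq_right.mpr hCD] using F.inter_face D hD C hC

end PolyFan

/-- If `ω` lies in the relative interior of a cone `C` of a fan `F` and a
sequence of points of `|F| \ C` converges to `ω`, then some cone `D` of `F` contains a
subsequence and has `C` as a proper face. -/
theorem stmt0 {n : ℕ} (F : PolyFan n) (C : Set (EuclideanSpace ℝ (Fin n)))
    (hC : C ∈ F.cones) (ω : EuclideanSpace ℝ (Fin n)) (hω : ω ∈ relint C)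
    (u : ℕ → EuclideanSpace ℝ (Fin n)) (hu : ∀ i, u i ∈ F.support \ C)
    (hlim : Filter.Tendsto u Filter.atTop (nhds ω)) :
    ∃ D ∈ F.cones, (IsFaceOf C D ∧ C ≠ D) ∧
      ∃ φ : ℕ → ℕ, StrictMono φ ∧ ∀ i, u (φ i) ∈ D := by
  obtain ⟨D, hD, hfreq⟩ := F.exists_frequently_mem (l := atTop) fun i ↦ (hu i).1
  obtain ⟨φ, hφ, huφ⟩ := extraction_of_frequently_atTop hfreq
  have hωD : ω ∈ D := (F.poly D hD).isClosed.mem_of_tendsto (hlim.comp hφ.tendsto_atTop)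
    (Eventually.of_forall huφ)
  have hCD : C ⊆ D := F.subset_of_mem_relint hC hD hω hωD
  refine ⟨D, hD, ⟨F.isFaceOf_of_subset hC hD hCD, ?_⟩, φ, hφ, huφ⟩
  rintro rfl
  exact (hu (φ 0)).2 (huφ 0)
end

section
/- Let E be a pure m-dimensional polyhedral fan in R^n and F any polyhedral fan in R^n whose support equals the support of E. Then F is also a pure m-dimensional fan, i.e., every cone of F is a face of an m-dimensional cone of F. -/
/-!
Let `D` be a maximal cone of `F` and `x` a relative interior point of `D`. A cone of `F` through
`x` meets `D` in a face containing `x`, hence contains `D` and equals it; the other cones of `F`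
are closed and miss `x`. So near `x` the support is just `D`. A maximal cone `M` of `E` through
`x` is therefore locally inside `D`, giving `m ≤ dim D`. Conversely `D` is covered by the
finitely many cones of `E`, all of dimension at most `m`; if they all had smaller dimension
than `D`, they would cover a relatively open subset of `D` by Haar-null sets, so `dim D ≤ m`.
Closedness of finitely generated cones comes from a conic Carathéodory theorem.
-/

open Set Function Metric Filter Topology AffineMap MeasureTheory

theorem Fintype.sum_subtype_eq_sum_of_support_subset {ι M : Type*} [Fintype ι] [AddCommMonoid M]
    {f : ι → M} {s : Set ι} [Fintype s] (hf : support f ⊆ s) : ∑ i : s, f i = ∑ i, f i := by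
  rw [Finset.sum_set_coe]
  exact Fintype.sum_subset fun i hi => by simpa using hf hi

section NonnegCombination

variable {ι E : Type*} [Fintype ι] [AddCommGroup E] [Module ℝ E]

theorem exists_nonneg_sum_smul_support_ssubset_of_relation {v : ι → E} {c g : ι → ℝ}
    (hc : 0 ≤ c) (hg : ∑ i, g i • v i = 0) (hgc : support g ⊆ support c) (hpos : ∃ i, 0 < g i) :
    ∃ c' : ι → ℝ, 0 ≤ c' ∧ ∑ i, c' i • v i = ∑ i, c i • v i ∧ support c' ⊂ support c := by
  classical
  obtain ⟨j, hj⟩ := hpos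
  obtain ⟨i₀, hi₀, hmin⟩ := Finset.exists_min_image (Finset.univ.filter fun i => 0 < g i)
    (fun i => c i / g i) ⟨j, by simpa using hj⟩
  have hgi₀ : 0 < g i₀ := (Finset.mem_filter.1 hi₀).2
  -- `t` is the largest step keeping `c - t • g` nonnegative; it kills the coordinate `i₀`.
  set t := c i₀ / g i₀
  have ht : 0 ≤ t := div_nonneg (hc i₀) hgi₀.le
  refine ⟨c - t • g, fun i => ?_, ?_, ?_⟩
  · show 0 ≤ c i - t * g i
    rcases lt_or_ge 0 (g i) with hgi | hgi
    · have hle : t * g i ≤ c i := (le_div_iff₀ hgi).1 (hmin i (by simpa using hgi))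
      linarith
    · have hle : t * g i ≤ 0 := mul_nonpos_of_nonneg_of_nonpos ht hgi
      linarith [show 0 ≤ c i from hc i]
  · simp [sub_smul, Finset.sum_sub_distrib, mul_smul, ← Finset.smul_sum, hg]
  · refine ssubset_of_subset_not_subset (fun i hi => ?_) fun hsub => ?_
    · by_contra hci
      exact hi (by simp [notMem_support.1 hci, notMem_support.1 (mt (@hgc i) hci)])
    · exact hsub (hgc hgi₀.ne') (by simp [t, div_mul_cancel₀ _ hgi₀.ne'])

theorem exists_nonneg_sum_smul_support_ssubset {v : ι → E} {c : ι → ℝ} (hc : 0 ≤ c)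
    (hdep : ¬ LinearIndepOn ℝ v (support c)) :
    ∃ c' : ι → ℝ, 0 ≤ c' ∧ ∑ i, c' i • v i = ∑ i, c i • v i ∧ support c' ⊂ support c := by
  classical
  simp only [linearIndepOn_iff'', not_forall] at hdep
  obtain ⟨t, g, hts, hgt, hrel, i, hit, hgi⟩ := hdep
  have hg : ∑ i, g i • v i = 0 := by
    rw [← hrel]; exact (Finset.sum_subset t.subset_univ fun i _ hi => by simp [hgt i hi]).symm
  have hgc : support g ⊆ support c := fun i hi => hts (by_contra fun h => hi (hgt i h))
  rcases Ne.lt_or_gt hgi with hneg | hpos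
  · exact exists_nonneg_sum_smul_support_ssubset_of_relation hc (g := -g) (by simp [hg])
      (by simpa using hgc) ⟨i, by simpa using hneg⟩
  · exact exists_nonneg_sum_smul_support_ssubset_of_relation hc hg hgc ⟨i, hpos⟩

theorem exists_nonneg_sum_smul_linearIndepOn (v : ι → E) {c : ι → ℝ} (hc : 0 ≤ c) :
    ∃ c' : ι → ℝ, 0 ≤ c' ∧ ∑ i, c' i • v i = ∑ i, c i • v i ∧
      LinearIndepOn ℝ v (support c') := by
  obtain ⟨_, ⟨c', hc', hsum, rfl⟩, hmin⟩ := (wellFounded_lt (α := Set ι)).has_min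
    {s | ∃ c' : ι → ℝ, 0 ≤ c' ∧ ∑ i, c' i • v i = ∑ i, c i • v i ∧ support c' = s}
    ⟨_, c, hc, rfl, rfl⟩
  refine ⟨c', hc', hsum, by_contra fun hdep => ?_⟩
  obtain ⟨c'', hc'', hsum', hlt⟩ := exists_nonneg_sum_smul_support_ssubset hc' hdep
  exact hmin _ ⟨c'', hc'', hsum'.trans hsum, rfl⟩ hlt

open Classical in
theorem image_Ici_fintypeLinearCombination_eq_iUnion (v : ι → E) :
    Fintype.linearCombination ℝ v '' Ici 0 =
      ⋃ (s : Set ι) (_ : LinearIndepOn ℝ v s),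
        Fintype.linearCombination ℝ (fun i : s => v i) '' Ici 0 := by
  ext x
  simp only [mem_iUnion, mem_image, mem_Ici, Fintype.linearCombination_apply]
  constructor
  · rintro ⟨c, hc, rfl⟩
    obtain ⟨c', hc', hsum, hind⟩ := exists_nonneg_sum_smul_linearIndepOn v hc
    refine ⟨_, hind, fun i => c' i, fun i => hc' i, ?_⟩
    rw [← hsum]
    exact Fintype.sum_subtype_eq_sum_of_support_subset (f := fun i => c' i • v i)
      (support_smul_subset_left _ _)
  · rintro ⟨s, -, g, hg, rfl⟩
    set c : ι → ℝ := fun i => if h : i ∈ s then g ⟨i, h⟩ else 0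
    have hcs : support (fun i => c i • v i) ⊆ s :=
      (support_smul_subset_left _ _).trans fun i hi => by_contra fun h => hi (dif_neg h)
    refine ⟨c, fun i => ?_, ?_⟩
    · by_cases h : i ∈ s
      · simpa [c, h] using hg ⟨i, h⟩
      · simp [c, h]
    · rw [← Fintype.sum_subtype_eq_sum_of_support_subset hcs]
      simp [c]

end NonnegCombination

section Normed

variable {E : Type*} [NormedAddCommGroup E] [NormedSpace ℝ E]

theorem isClosed_image_Ici_fintypeLinearCombination {ι : Type*} [Fintype ι]
    [FiniteDimensional ℝ E] (v : ι → E) : IsClosed (Fintype.linearCombination ℝ v '' Ici 0) := by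
  classical
  rw [image_Ici_fintypeLinearCombination_eq_iUnion]
  refine isClosed_iUnion_of_finite fun s => isClosed_iUnion_of_finite fun hs => ?_
  have hinj := linearIndependent_iff_injective_fintypeLinearCombination.1 hs
  exact (LinearMap.isClosedEmbedding_of_injective (LinearMap.ker_eq_bot.2 hinj)).isClosedMap _
    isClosed_Ici

theorem eventually_lineMap_mem_of_mem_intrinsicInterior {s : Set E} {x y : E}
    (hx : x ∈ intrinsicInterior ℝ s) (hy : y ∈ affineSpan ℝ s) :
    ∀ᶠ r in 𝓝 (0 : ℝ), lineMap x y r ∈ s := by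
  obtain ⟨x', hx', rfl⟩ := mem_intrinsicInterior.1 hx
  let f : ℝ → affineSpan ℝ s := fun r => ⟨lineMap (x' : E) y r, AffineMap.lineMap_mem r x'.2 hy⟩
  have hf : Continuous f := lineMap_continuous.subtype_mk _
  have hf0 : f 0 = x' := Subtype.ext (lineMap_apply_zero _ _)
  exact (hf.tendsto 0).eventually (hf0 ▸ mem_interior_iff_mem_nhds.1 hx')

theorem eq_zero_of_mem_intrinsicInterior {s : Set E} {l : E →ₗ[ℝ] ℝ} (hl : ∀ y ∈ s, l y ≤ 0)
    {x : E} (hx : x ∈ intrinsicInterior ℝ s) (hx0 : l x = 0) {y : E} (hy : y ∈ s) : l y = 0 := by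
  obtain ⟨r, hr, hrs⟩ := ((eventually_lineMap_mem_of_mem_intrinsicInterior hx
    (subset_affineSpan ℝ s hy)).filter_mono nhdsWithin_le_nhds).and self_mem_nhdsWithin
    |>.exists (f := 𝓝[<] (0 : ℝ))
  have := hl _ hr
  simp only [lineMap_apply_module, map_add, map_smul, hx0, smul_eq_mul] at this
  nlinarith [hl y hy]

theorem Convex.affineSpan_inter_ball {M : Set E} (hM : Convex ℝ M) {x : E} (hx : x ∈ M) {ε : ℝ}
    (hε : 0 < ε) : affineSpan ℝ (M ∩ ball x ε) = affineSpan ℝ M := by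
  refine le_antisymm (affineSpan_mono ℝ inter_subset_left) (affineSpan_le.2 fun y hy => ?_)
  have hxε : x ∈ M ∩ ball x ε := ⟨hx, mem_ball_self hε⟩
  rcases eq_or_ne x y with rfl | hxy
  · exact subset_affineSpan ℝ _ hxε
  have hnear : ∀ᶠ r in 𝓝 (0 : ℝ), lineMap x y r ∈ ball x ε :=
    (lineMap_continuous.tendsto' 0 x (lineMap_apply_zero _ _)).eventually (ball_mem_nhds x hε)
  obtain ⟨r, hrε, hr0, hr1⟩ := (hnear.filter_mono nhdsWithin_le_nhds).and
    (Ioo_mem_nhdsGT (zero_lt_one' ℝ)) |>.exists (f := 𝓝[>] (0 : ℝ))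
  set z := lineMap x y r
  have hzM : z ∈ M := hM.lineMap_mem hx hy ⟨hr0.le, hr1.le⟩
  have hxz : x ≠ z := fun h => hr0.ne' ((lineMap_eq_left_iff.1 h.symm).resolve_left hxy)
  have hyz : y ∈ line[ℝ, x, z] :=
    (wbtw_lineMap_iff.2 (Or.inr ⟨hr0.le, hr1.le⟩)).right_mem_affineSpan_of_left_ne hxz
  exact affineSpan_pair_le_of_mem_of_mem (subset_affineSpan ℝ _ hxε)
    (subset_affineSpan ℝ _ ⟨hzM, hrε⟩) hyz

theorem exists_add_mem_of_mem_intrinsicInterior {s : Set E} {x : E}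
    (hx : x ∈ intrinsicInterior ℝ s) :
    ∃ δ > 0, ∀ v ∈ (affineSpan ℝ s).direction, ‖v‖ < δ → v + x ∈ s := by
  obtain ⟨x', hx', rfl⟩ := mem_intrinsicInterior.1 hx
  obtain ⟨δ, hδ, hball⟩ := Metric.mem_nhds_iff.1 (mem_interior_iff_mem_nhds.1 hx')
  refine ⟨δ, hδ, fun v hv hvδ => ?_⟩
  have : Nonempty (affineSpan ℝ s) := ⟨x'⟩
  have : (⟨v, hv⟩ : (affineSpan ℝ s).direction) +ᵥ x' ∈ ball x' δ := by
    rwa [mem_ball, dist_vadd_left]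
  exact hball this

theorem exists_le_finrank_direction_of_subset_sUnion [FiniteDimensional ℝ E] {s : Set E} {x : E}
    (hx : x ∈ intrinsicInterior ℝ s) {S : Set (Set E)} (hS : S.Finite) (hsS : s ⊆ ⋃₀ S) :
    ∃ A ∈ S, Module.finrank ℝ (affineSpan ℝ s).direction ≤
      Module.finrank ℝ (affineSpan ℝ A).direction := by
  by_contra! hlt
  -- Each piece then sits in a proper affine subspace of `V`, hence is Haar-null, yet they cover
  -- a ball of `V`.
  set V := (affineSpan ℝ s).direction
  borelize ↥V
  obtain ⟨δ, hδ, hmem⟩ := exists_add_mem_of_mem_intrinsicInterior hx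
  let f : V →ᵃ[ℝ] E := V.subtype.toAffineMap + AffineMap.const ℝ V x
  have hf : ∀ v, f v = v + x := fun v => rfl
  have hnull : ∀ A ∈ S, Measure.addHaar (f ⁻¹' A) = 0 := by
    intro A hA
    have hne : (affineSpan ℝ A).comap f ≠ ⊤ := by
      intro htop
      have hspan : ∀ v, f v ∈ affineSpan ℝ A := fun v =>
        AffineSubspace.mem_comap.1 (htop ▸ AffineSubspace.mem_top ℝ V v)
      have hV : V ≤ (affineSpan ℝ A).direction := fun v hv => by
        simpa [hf] using AffineSubspace.vsub_mem_direction (hspan ⟨v, hv⟩) (hspan 0)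
      exact (hlt A hA).not_ge (Submodule.finrank_mono hV)
    exact measure_mono_null (fun v hv => subset_affineSpan ℝ A hv)
      (Measure.addHaar_affineSubspace _ _ hne)
  have hcover : ball (0 : V) δ ⊆ ⋃ A ∈ S, f ⁻¹' A := fun v hv => by
    rw [mem_ball_zero_iff] at hv
    simpa [hf] using hsS (hmem v v.2 hv)
  exact (measure_ball_pos Measure.addHaar (0 : V) hδ).ne'
    (measure_mono_null hcover ((measure_biUnion_null_iff hS.countable).2 hnull))

end Normed

section Fan

variable {n : ℕ} {C D M : Set (EuclideanSpace ℝ (Fin n))} {x : EuclideanSpace ℝ (Fin n)}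

theorem IsPolyCone.exists_eq_image (h : IsPolyCone C) :
    ∃ (m : ℕ) (v : Fin m → EuclideanSpace ℝ (Fin n)),
      C = Fintype.linearCombination ℝ v '' Ici 0 := by
  obtain ⟨m, v, rfl⟩ := h
  refine ⟨m, v, ?_⟩
  ext x
  simp [Fintype.linearCombination_apply, eq_comm, Pi.le_def]

theorem IsPolyCone.convex (h : IsPolyCone C) : Convex ℝ C := by
  obtain ⟨m, v, rfl⟩ := h.exists_eq_image
  exact (convex_Ici 0).linear_image _

theorem IsPolyCone.nonempty (h : IsPolyCone C) : C.Nonempty := by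
  obtain ⟨m, v, rfl⟩ := h.exists_eq_image
  exact nonempty_Ici.image _

theorem IsPolyCone.isClosed_s1 (h : IsPolyCone C) : IsClosed C := by
  obtain ⟨m, v, rfl⟩ := h.exists_eq_image
  exact isClosed_image_Ici_fintypeLinearCombination v

theorem coneDim_mono (h : C ⊆ D) : coneDim C ≤ coneDim D :=
  Submodule.finrank_mono (AffineSubspace.direction_le (affineSpan_mono ℝ h))

theorem IsFaceOf.eq_of_mem_intrinsicInterior (hCD : IsFaceOf C D) (hxC : x ∈ C)
    (hx : x ∈ intrinsicInterior ℝ D) : C = D := by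
  rcases hCD with rfl | ⟨l, hl, rfl⟩
  · rfl
  · exact sep_eq_self_iff_mem_true.2 fun y hy => eq_zero_of_mem_intrinsicInterior hl hx hxC.2 hy

namespace PolyFan

variable {F : PolyFan n}

theorem subset_support (hC : C ∈ F.cones) : C ⊆ F.support :=
  subset_biUnion_of_mem (u := id) hC

theorem support_eq_sUnion (F : PolyFan n) : F.support = ⋃₀ F.cones :=
  sUnion_eq_biUnion.symm

theorem exists_isMaximal_superset (hC : C ∈ F.cones) : ∃ D, F.IsMaximal D ∧ C ⊆ D := by
  obtain ⟨D, ⟨hD, hCD⟩, hmax⟩ := (F.finite.subset fun D hD => hD.1 :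
    {D | D ∈ F.cones ∧ C ⊆ D}.Finite).exists_maximal ⟨C, hC, subset_rfl⟩
  exact ⟨D, ⟨hD, fun D' hD' hDD' => (hmax ⟨hD', hCD.trans hDD'⟩ hDD').antisymm hDD'⟩, hCD⟩

theorem IsMaximal.eq_of_mem_intrinsicInterior (hD : F.IsMaximal D)
    (hx : x ∈ intrinsicInterior ℝ D) (hC : C ∈ F.cones) (hxC : x ∈ C) : C = D :=
  hD.2 C hC ((F.inter_face D hD.1 C hC).eq_of_mem_intrinsicInterior
    ⟨intrinsicInterior_subset hx, hxC⟩ hx ▸ inter_subset_right)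

theorem IsMaximal.eventually_mem_of_mem_support (hD : F.IsMaximal D)
    (hx : x ∈ intrinsicInterior ℝ D) : ∀ᶠ y in 𝓝 x, y ∈ F.support → y ∈ D := by
  have : ∀ C ∈ F.cones, ∀ᶠ y in 𝓝 x, y ∈ C → y ∈ D := fun C hC => by
    by_cases hxC : x ∈ C
    · exact .of_forall fun y => (hD.eq_of_mem_intrinsicInterior hx hC hxC ▸ ·)
    · filter_upwards [(F.poly C hC).isClosed_s1.isOpen_compl.mem_nhds hxC] with y hy h
      exact absurd h hy
  filter_upwards [(eventually_all_finite F.finite).2 this] with y hy hyF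
  obtain ⟨C, hC, hyC⟩ := mem_iUnion₂.1 hyF
  exact hy C hC hyC

theorem IsMaximal.coneDim_le_of_mem_intrinsicInterior (hD : F.IsMaximal D) (hM : Convex ℝ M)
    (hMF : M ⊆ F.support) (hxM : x ∈ M) (hx : x ∈ intrinsicInterior ℝ D) :
    coneDim M ≤ coneDim D := by
  obtain ⟨ε, hε, hball⟩ := Metric.eventually_nhds_iff.1 (hD.eventually_mem_of_mem_support hx)
  calc coneDim M = coneDim (M ∩ ball x ε) := by
        rw [coneDim, coneDim, hM.affineSpan_inter_ball hxM hε]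
    _ ≤ coneDim D := coneDim_mono fun y ⟨hyM, hyx⟩ => hball hyx (hMF hyM)

theorem coneDim_le_of_isPure {m : ℕ} (hF : ∀ C, F.IsMaximal C → coneDim C = m)
    (hC : C ∈ F.cones) : coneDim C ≤ m := by
  obtain ⟨D, hD, hCD⟩ := exists_isMaximal_superset hC
  exact hF D hD ▸ coneDim_mono hCD

theorem coneDim_le_of_subset_support {m : ℕ} (hF : ∀ C, F.IsMaximal C → coneDim C = m)
    (hD : Convex ℝ D) (hne : D.Nonempty) (hDF : D ⊆ F.support) : coneDim D ≤ m := by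
  obtain ⟨x, hx⟩ := hne.intrinsicInterior hD
  obtain ⟨A, hA, hDA⟩ := exists_le_finrank_direction_of_subset_sUnion hx F.finite
    (F.support_eq_sUnion ▸ hDF)
  exact hDA.trans (coneDim_le_of_isPure hF hA)

theorem IsMaximal.coneDim_eq {m : ℕ} {E : PolyFan n} (hE : ∀ C, E.IsMaximal C → coneDim C = m)
    (hsupp : F.support = E.support) (hD : F.IsMaximal D) : coneDim D = m := by
  have hDpoly := F.poly D hD.1
  refine le_antisymm (coneDim_le_of_subset_support hE hDpoly.convex hDpoly.nonempty
    (hsupp ▸ subset_support hD.1)) ?_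
  obtain ⟨x, hx⟩ := hDpoly.nonempty.intrinsicInterior hDpoly.convex
  obtain ⟨C, hC, hxC⟩ := mem_iUnion₂.1 (hsupp ▸ subset_support hD.1 (intrinsicInterior_subset hx))
  obtain ⟨M, hM, hCM⟩ := exists_isMaximal_superset hC
  exact hE M hM ▸ hD.coneDim_le_of_mem_intrinsicInterior (E.poly M hM.1).convex
    (hsupp ▸ subset_support hM.1) (hCM hxC) hx

end PolyFan

end Fan

/-- If `E` is a pure `m`-dimensional fan and `F` is any fan with the same
support, then `F` is also pure `m`-dimensional: every cone of `F` is a face of an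
`m`-dimensional cone of `F`. -/
theorem stmt1 {n : ℕ} (m : ℕ) (E F : PolyFan n)
    (hE : ∀ C, E.IsMaximal C → coneDim C = m)
    (hsupp : F.support = E.support) :
    ∀ C ∈ F.cones, ∃ D ∈ F.cones, coneDim D = m ∧ IsFaceOf C D := by
  intro C hC
  obtain ⟨D, hD, hCD⟩ := PolyFan.exists_isMaximal_superset hC
  refine ⟨D, hD.1, hD.coneDim_eq hE hsupp, ?_⟩
  simpa [inter_eq_self_of_subset_right hCD] using F.inter_face D hD.1 C hC
end

section
/- Let E and F be polyhedral fans in R^n. Then E refines F (i.e., for every cone K of E there is a cone L of F with the relative interior of K contained in the relative interior of L) if and only if for every maximal cone C of E there exists a cone D of F such that the relative interior of C is contained in the relative interior of D. -/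
open Set Metric

section IntrinsicInterior

lemma mem_interior_preimage_val_iff {X : Type*} [PseudoMetricSpace X] {T s : Set X} {x : T} :
    x ∈ interior (Subtype.val ⁻¹' s : Set T) ↔ ∃ ε > 0, ball (x : X) ε ∩ T ⊆ s := by
  rw [mem_interior_iff_mem_nhds, mem_nhds_subtype]
  constructor
  · rintro ⟨u, hu, hus⟩
    obtain ⟨ε, hε, hball⟩ := Metric.mem_nhds_iff.mp hu
    exact ⟨ε, hε, fun y ⟨hy, hyT⟩ ↦ hus (show (⟨y, hyT⟩ : T) ∈ Subtype.val ⁻¹' u from hball hy)⟩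
  · rintro ⟨ε, hε, hball⟩
    exact ⟨ball x ε, ball_mem_nhds _ hε, fun y hy ↦ hball ⟨hy, y.2⟩⟩

variable {X : Type*} [NormedAddCommGroup X] [NormedSpace ℝ X] {s : Set X} {x y : X}

lemma mem_intrinsicInterior_iff_ball :
    x ∈ intrinsicInterior ℝ s ↔
      x ∈ affineSpan ℝ s ∧ ∃ ε > 0, ball x ε ∩ affineSpan ℝ s ⊆ s := by
  constructor
  · rintro ⟨y, hy, rfl⟩
    exact ⟨y.2, mem_interior_preimage_val_iff.1 hy⟩
  · rintro ⟨hx, h⟩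
    exact ⟨⟨x, hx⟩, mem_interior_preimage_val_iff.2 h, rfl⟩

lemma exists_mem_openSegment_of_mem_intrinsicInterior (hx : x ∈ intrinsicInterior ℝ s)
    (hy : y ∈ s) : ∃ z ∈ s, x ∈ openSegment ℝ y z := by
  obtain ⟨hxA, ε, hε, hball⟩ := mem_intrinsicInterior_iff_ball.1 hx
  set t := ε / (‖x - y‖ + 1)
  have ht : 0 < t := by positivity
  have hdist : x + t • (x - y) ∈ ball x ε := by
    rw [mem_ball, dist_eq_norm, add_sub_cancel_left, norm_smul, Real.norm_of_nonneg ht.le]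
    calc t * ‖x - y‖ < t * (‖x - y‖ + 1) := by gcongr; linarith
      _ = ε := div_mul_cancel₀ _ (by positivity)
  have hA : x + t • (x - y) ∈ affineSpan ℝ s := by
    convert AffineMap.lineMap_mem (1 + t) (subset_affineSpan ℝ s hy) hxA using 1
    rw [AffineMap.lineMap_apply_module']
    module
  refine ⟨_, hball ⟨hdist, hA⟩, t / (1 + t), 1 / (1 + t), by positivity, by positivity,
    by field_simp; ring, ?_⟩
  match_scalars
  · field_simp; ring
  · field_simp

lemma Convex.openSegment_intrinsicInterior_self_subset_intrinsicInterior (hs : Convex ℝ s)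
    (hx : x ∈ intrinsicInterior ℝ s) (hy : y ∈ s) :
    openSegment ℝ x y ⊆ intrinsicInterior ℝ s := by
  obtain ⟨hxA, ε, hε, hball⟩ := mem_intrinsicInterior_iff_ball.1 hx
  have hyA : y ∈ affineSpan ℝ s := subset_affineSpan ℝ s hy
  rintro _ ⟨a, b, ha, hb, hab, rfl⟩
  have hwA : a • x + b • y ∈ affineSpan ℝ s := (affineSpan ℝ s).convex hxA hyA ha.le hb.le hab
  refine mem_intrinsicInterior_iff_ball.2 ⟨hwA, a * ε, by positivity, fun u ⟨hu, huA⟩ ↦ ?_⟩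
  -- `u` is the image of a point `x'` near `x` under the homothety `z ↦ a • z + b • y`.
  set x' := a⁻¹ • (u - (a • x + b • y)) + x
  have hx'A : x' ∈ affineSpan ℝ s :=
    AffineSubspace.vadd_mem_of_mem_direction
      (Submodule.smul_mem _ a⁻¹ (AffineSubspace.vsub_mem_direction huA hwA)) hxA
  have hx'x : x' ∈ ball x ε := by
    rw [mem_ball, dist_eq_norm, add_sub_cancel_right, norm_smul, norm_inv,
      Real.norm_of_nonneg ha.le, inv_mul_lt_iff₀ ha, ← dist_eq_norm]
    exact hu
  have hu : u = a • x' + b • y := by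
    simp only [x', smul_add, smul_smul, mul_inv_cancel₀ ha.ne']
    module
  exact hu ▸ hs (hball ⟨hx'x, hx'A⟩) hy ha.le hb.le hab

lemma Convex.subset_closure_intrinsicInterior [FiniteDimensional ℝ X] (hs : Convex ℝ s) :
    s ⊆ closure (intrinsicInterior ℝ s) := by
  intro y hy
  obtain ⟨x, hx⟩ := Set.Nonempty.intrinsicInterior hs ⟨y, hy⟩
  have : y ∈ closure (openSegment ℝ x y) := by
    rw [closure_openSegment]
    exact right_mem_segment ℝ x y
  exact closure_mono (hs.openSegment_intrinsicInterior_self_subset_intrinsicInterior hx hy) this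

lemma LinearMap.eq_zero_of_nonpos_of_mem_intrinsicInterior {l : X →ₗ[ℝ] ℝ}
    (hl : ∀ y ∈ s, l y ≤ 0) (hx : x ∈ intrinsicInterior ℝ s) (hlx : l x = 0) (hy : y ∈ s) :
    l y = 0 := by
  obtain ⟨z, hz, a, b, ha, hb, -, hxyz⟩ := exists_mem_openSegment_of_mem_intrinsicInterior hx hy
  have : a * l y + b * l z = 0 := by rw [← hlx, ← hxyz]; simp
  nlinarith [hl y hy, hl z hz, mul_nonpos_of_nonneg_of_nonpos ha.le (hl y hy)]

end IntrinsicInterior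

namespace PointedCone

variable {X : Type*} [NormedAddCommGroup X] [NormedSpace ℝ X] (K : PointedCone ℝ X) {x : X}

lemma mem_intrinsicInterior_iff_mem_interior_span (hx : x ∈ Submodule.span ℝ (K : Set X)) :
    x ∈ intrinsicInterior ℝ (K : Set X) ↔
      (⟨x, hx⟩ : Submodule.span ℝ (K : Set X)) ∈ interior (Subtype.val ⁻¹' (K : Set X)) := by
  have hA : (affineSpan ℝ (K : Set X) : Set X) = Submodule.span ℝ (K : Set X) := by
    rw [← affineSpan_insert_zero, insert_eq_of_mem K.zero_mem]
  rw [mem_intrinsicInterior_iff_ball, mem_interior_preimage_val_iff, hA]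
  exact and_iff_right (by rwa [← SetLike.mem_coe, hA])

lemma exists_supporting_functional [FiniteDimensional ℝ X] (hxK : x ∈ K)
    (hx : x ∉ intrinsicInterior ℝ (K : Set X)) :
    ∃ l : X →ₗ[ℝ] ℝ, (∀ y ∈ K, l y ≤ 0) ∧ l x = 0 ∧ ∃ y ∈ K, l y < 0 := by
  set V := Submodule.span ℝ (K : Set X)
  set K' : Set V := Subtype.val ⁻¹' K
  have hK' : Convex ℝ K' := K.convex.linear_preimage V.subtype
  have hint : (interior K').Nonempty := by
    obtain ⟨x₀, hx₀⟩ := Set.Nonempty.intrinsicInterior K.convex ⟨0, K.zero_mem⟩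
    exact ⟨_, (K.mem_intrinsicInterior_iff_mem_interior_span
      (Submodule.subset_span (intrinsicInterior_subset hx₀))).1 hx₀⟩
  set x' : V := ⟨x, Submodule.subset_span hxK⟩
  obtain ⟨f, hf⟩ := geometric_hahn_banach_open_point hK'.interior isOpen_interior
    (mt (K.mem_intrinsicInterior_iff_mem_interior_span _).2 hx)
  have hfK : ∀ y ∈ K', f y ≤ f x' := by
    have : closure (interior K') ⊆ {y | f y ≤ f x'} :=
      closure_minimal (fun y hy ↦ (hf y hy).le) (isClosed_le f.continuous continuous_const)
    rw [hK'.closure_interior_eq_closure_of_nonempty_interior hint] at this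
    exact fun y hy ↦ this (subset_closure hy)
  -- the supporting hyperplane passes through `0` because `K` is a cone
  have hfx : f x' = 0 := by
    have h0 := hfK 0 K.zero_mem
    have h2 := hfK ((2 : ℝ) • x') (K.smul_mem zero_le_two hxK)
    rw [map_zero] at h0
    rw [map_smul, smul_eq_mul] at h2
    linarith
  obtain ⟨l, hl⟩ := LinearMap.exists_extend (f : V →ₗ[ℝ] ℝ)
  have hlf (y : V) : l y = f y := LinearMap.congr_fun hl y
  obtain ⟨y₀, hy₀⟩ := hint
  refine ⟨l, fun y hy ↦ ?_, by rw [hlf x', hfx], y₀, (interior_subset hy₀ : y₀ ∈ K'), ?_⟩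
  · rw [hlf ⟨y, Submodule.subset_span hy⟩]
    exact (hfK _ hy).trans_eq hfx
  · rw [hlf]
    exact (hf y₀ hy₀).trans_eq hfx

end PointedCone

section ConicalHull

variable {X : Type*} [AddCommGroup X] [Module ℝ X] {ι : Type*} (v : ι → X)

def conicalHull [Fintype ι] : PointedCone ℝ X where
  carrier := {x | ∃ c : ι → ℝ, (∀ i, 0 ≤ c i) ∧ x = ∑ i, c i • v i}
  add_mem' := by
    rintro _ _ ⟨c, hc, rfl⟩ ⟨d, hd, rfl⟩
    exact ⟨c + d, fun i ↦ add_nonneg (hc i) (hd i), by simp [add_smul, Finset.sum_add_distrib]⟩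
  zero_mem' := ⟨0, fun _ ↦ le_rfl, by simp⟩
  smul_mem' := by
    rintro t _ ⟨c, hc, rfl⟩
    exact ⟨fun i ↦ t * c i, fun i ↦ mul_nonneg t.2 (hc i),
      by simp [Finset.smul_sum, mul_smul]⟩

lemma coe_conicalHull [Fintype ι] :
    (conicalHull v : Set X) = Fintype.linearCombination ℝ v '' Ici 0 := by
  ext x
  simp [conicalHull, Fintype.linearCombination_apply, Pi.le_def, eq_comm]

lemma mem_conicalHull_self [Fintype ι] [DecidableEq ι] (i : ι) : v i ∈ conicalHull v :=
  ⟨Pi.single i 1, fun j ↦ by by_cases h : j = i <;> simp [h],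
    by simp [Pi.single_apply]⟩

lemma conicalHull_comp_le [Fintype ι] {κ : Type*} [Fintype κ] (f : κ → ι) :
    conicalHull (v ∘ f) ≤ conicalHull v := by
  classical
  rintro _ ⟨c, hc, rfl⟩
  exact Submodule.sum_mem _ fun k _ ↦ (conicalHull v).smul_mem (hc k) (mem_conicalHull_self v _)

/-- The exchange step of Carathéodory's theorem for cones. -/
lemma exists_sum_erase_eq_of_not_linearIndepOn {s : Finset ι} [DecidableEq ι]
    (hs : ¬LinearIndepOn ℝ v (s : Set ι)) {c : ι → ℝ} (hc : ∀ i ∈ s, 0 ≤ c i) :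
    ∃ i₀ ∈ s, ∃ c' : ι → ℝ, (∀ i ∈ s.erase i₀, 0 ≤ c' i) ∧
      ∑ i ∈ s.erase i₀, c' i • v i = ∑ i ∈ s, c i • v i := by
  obtain ⟨g, hg, j, hj, hgj⟩ := not_linearIndepOn_finset_iff.1 hs
  wlog hpos : 0 < g j generalizing g
  · exact this (-g) (by simp [hg]) (by simpa using hgj)
      (by simpa using lt_of_le_of_ne (not_lt.1 hpos) hgj)
  obtain ⟨i₀, hi₀, hmin⟩ := (s.filter (0 < g ·)).exists_min_image (fun i ↦ c i / g i)
    ⟨j, Finset.mem_filter.2 ⟨hj, hpos⟩⟩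
  obtain ⟨hi₀s, hgi₀⟩ := Finset.mem_filter.1 hi₀
  set t := c i₀ / g i₀
  have ht : 0 ≤ t := div_nonneg (hc i₀ hi₀s) hgi₀.le
  refine ⟨i₀, hi₀s, fun i ↦ c i - t * g i, fun i hi ↦ ?_, ?_⟩
  · have his := Finset.mem_of_mem_erase hi
    rcases lt_or_ge 0 (g i) with hgi | hgi
    · have := hmin i (Finset.mem_filter.2 ⟨his, hgi⟩)
      rw [le_div_iff₀ hgi] at this
      linarith
    · nlinarith [hc i his]
  · rw [Finset.sum_erase _ (by simp [t, div_mul_cancel₀ _ hgi₀.ne'])]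
    simp [sub_smul, Finset.sum_sub_distrib, mul_smul, ← Finset.smul_sum, hg]

lemma exists_linearIndepOn_sum_eq (s : Finset ι) {c : ι → ℝ} (hc : ∀ i ∈ s, 0 ≤ c i) :
    ∃ t : Finset ι, LinearIndepOn ℝ v (t : Set ι) ∧ ∃ c' : ι → ℝ, (∀ i ∈ t, 0 ≤ c' i) ∧
      ∑ i ∈ t, c' i • v i = ∑ i ∈ s, c i • v i := by
  classical
  induction s using Finset.strongInduction generalizing c with
  | H s ih =>
    by_cases hs : LinearIndepOn ℝ v (s : Set ι)
    · exact ⟨s, hs, c, hc, rfl⟩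
    · obtain ⟨i₀, hi₀, c', hc', hsum⟩ := exists_sum_erase_eq_of_not_linearIndepOn v hs hc
      obtain ⟨t, ht, c'', hc'', hsum'⟩ := ih _ (Finset.erase_ssubset hi₀) hc'
      exact ⟨t, ht, c'', hc'', hsum'.trans hsum⟩

variable [Fintype ι] [TopologicalSpace X] [IsTopologicalAddGroup X] [ContinuousSMul ℝ X] [T2Space X]

lemma isClosed_conicalHull_of_linearIndependent (hv : LinearIndependent ℝ v) :
    IsClosed (conicalHull v : Set X) := by
  rw [coe_conicalHull]
  exact (LinearMap.isClosedEmbedding_of_injective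
    (LinearMap.ker_eq_bot.2 hv.fintypeLinearCombination_injective)).isClosedMap _ isClosed_Ici

theorem isClosed_conicalHull : IsClosed (conicalHull v : Set X) := by
  have hunion : (conicalHull v : Set X) =
      ⋃ t ∈ {t : Finset ι | LinearIndepOn ℝ v (t : Set ι)}, conicalHull (fun i : t ↦ v i) := by
    refine subset_antisymm ?_ (iUnion₂_subset fun t _ ↦ conicalHull_comp_le v Subtype.val)
    rintro _ ⟨c, hc, rfl⟩
    obtain ⟨t, ht, c', hc', hsum⟩ := exists_linearIndepOn_sum_eq v Finset.univ fun i _ ↦ hc i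
    refine mem_biUnion ht ⟨fun i ↦ c' i, fun i ↦ hc' i i.2, ?_⟩
    rw [← hsum, ← Finset.sum_coe_sort t]
  rw [hunion]
  exact (toFinite _).isClosed_biUnion fun t ht ↦ isClosed_conicalHull_of_linearIndependent _ ht

end ConicalHull

section Fans

variable {n : ℕ}

lemma isPolyCone_iff {C : Set (EuclideanSpace ℝ (Fin n))} :
    IsPolyCone C ↔ ∃ (m : ℕ) (v : Fin m → EuclideanSpace ℝ (Fin n)), C = conicalHull v :=
  Iff.rfl

lemma PolyFan.exists_isMaximal_superset_s3 (E : PolyFan n) {C : Set (EuclideanSpace ℝ (Fin n))}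
    (hC : C ∈ E.cones) : ∃ M, E.IsMaximal M ∧ C ⊆ M := by
  obtain ⟨M, hCM, hM⟩ := E.finite.exists_le_maximal hC
  exact ⟨M, ⟨hM.prop, fun D hD hMD ↦ le_antisymm (hM.2 hD hMD) hMD⟩, hCM⟩

lemma PolyFan.exists_relint_subset_of_subset (F : PolyFan n)
    {C D : Set (EuclideanSpace ℝ (Fin n))} (hD : D ∈ F.cones) (hCD : C ⊆ D) :
    ∃ G ∈ F.cones, relint C ⊆ relint G := by
  obtain ⟨G, -, hGmin⟩ := (F.finite.inter_of_left {G | C ⊆ G}).exists_le_minimal ⟨hD, hCD⟩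
  obtain ⟨hG, hCG⟩ := hGmin.prop
  refine ⟨G, hG, fun w hw ↦ by_contra fun hwG ↦ ?_⟩
  obtain ⟨m, v, rfl⟩ := isPolyCone_iff.1 (F.poly G hG)
  obtain ⟨l, hlG, hlw, y, hyG, hly⟩ :=
    PointedCone.exists_supporting_functional _ (hCG (intrinsicInterior_subset hw)) hwG
  have hface : {z ∈ (conicalHull v : Set _) | l z = 0} ∈ F.cones :=
    F.faces_mem _ hG _ (Or.inr ⟨l, hlG, rfl⟩)
  have hCface : C ⊆ {z ∈ (conicalHull v : Set _) | l z = 0} := fun z hz ↦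
    ⟨hCG hz, l.eq_zero_of_nonpos_of_mem_intrinsicInterior (fun z hz ↦ hlG z (hCG hz)) hw hlw hz⟩
  exact hly.ne (hGmin.2 ⟨hface, hCface⟩ (sep_subset _ _) hyG).2

end Fans

/-- A fan `E` refines a fan `F` iff every maximal cone of `E` has its
relative interior contained in the relative interior of some cone of `F`. -/
theorem stmt3 {n : ℕ} (E F : PolyFan n) :
    (∀ C ∈ E.cones, ∃ D ∈ F.cones, relint C ⊆ relint D) ↔
    (∀ C, E.IsMaximal C → ∃ D ∈ F.cones, relint C ⊆ relint D) := by
  refine ⟨fun h C hC ↦ h C hC.1, fun h C hC ↦ ?_⟩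
  obtain ⟨M, hM, hCM⟩ := E.exists_isMaximal_superset_s3 hC
  obtain ⟨D, hD, hMD⟩ := h M hM
  obtain ⟨m, v, rfl⟩ := isPolyCone_iff.1 (E.poly M hM.1)
  obtain ⟨m', w, rfl⟩ := isPolyCone_iff.1 (F.poly D hD)
  have hCD : C ⊆ conicalHull w := calc
    C ⊆ conicalHull v := hCM
    _ ⊆ closure (relint (conicalHull v)) := (conicalHull v).convex.subset_closure_intrinsicInterior
    _ ⊆ closure (conicalHull w) := closure_mono (hMD.trans intrinsicInterior_subset)
    _ = conicalHull w := (isClosed_conicalHull w).closure_eq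
  exact F.exists_relint_subset_of_subset hD hCD
end

section
/- Fix c ∈ N and ω ∈ R^n with 0 = ω_1 = ... = ω_{n−m+1} and c·ω_i < ω_{i+1} for i = n−m+1, ..., n−1. Let ≻ be the graded reverse lexicographic order with x_1 ≻ ... ≻ x_n, and let ≻_ω be its refinement by ω-weight (first compare by minimal ω-weight, ties broken by ≻). Then for any two monomials x^ν, x^μ of the same total degree t ≤ c, x^ν ≻ x^μ if and only if x^ν ≻_ω x^μ. -/
/-- The `ω`-weight `ω · ν` of a monomial exponent vector `ν`. -/
noncomputable def wt {n : ℕ} (ω : Fin n → ℝ) (ν : Fin n → ℕ) : ℝ :=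
  ∑ i, ω i * (ν i : ℝ)

/-- `x^ν ≻ x^μ` in the (graded) reverse lexicographic order with
`x_1 ≻ … ≻ x_n` (for exponent vectors of equal total degree): the last index where
they differ has a strictly smaller exponent in `ν`. -/
def RevlexGT {n : ℕ} (ν μ : Fin n → ℕ) : Prop :=
  ∃ k : Fin n, ν k < μ k ∧ ∀ j, k < j → ν j = μ j

/-!
If `x^ν ≻ x^μ`, let `k` be the last index where the exponents differ, so `ν_k < μ_k`.
Then `ω·μ - ω·ν ≥ ω_k - ∑_{i<k} ω_i ν_i`, and since the degree of `ν` is at most `c`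
while `c·ω_i ≤ ω_k` for every `i < k`, this is nonnegative. Hence `≻` never contradicts the
`ω`-weight, so refining `≻` by the weight changes nothing; the converse uses that `≻` is total.
-/

open Finset

lemma revlexGT_or_revlexGT_of_ne {n : ℕ} {ν μ : Fin n → ℕ} (h : ν ≠ μ) :
    RevlexGT ν μ ∨ RevlexGT μ ν := by
  classical
  have hne : (univ.filter fun i => ν i ≠ μ i).Nonempty := by
    obtain ⟨i, hi⟩ := Function.ne_iff.mp h
    exact ⟨i, by simpa using hi⟩
  obtain ⟨k, hk, hmax⟩ := exists_max_image _ id hne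
  have hafter : ∀ j, k < j → ν j = μ j := fun j hkj => by
    by_contra hj
    exact (hmax j (by simpa using hj)).not_gt hkj
  rcases lt_or_gt_of_ne (mem_filter.mp hk).2 with hlt | hgt
  · exact Or.inl ⟨k, hlt, hafter⟩
  · exact Or.inr ⟨k, hgt, fun j hkj => (hafter j hkj).symm⟩

lemma sum_mul_natCast_le {ι : Type*} (s : Finset ι) (w : ι → ℝ) (ν : ι → ℕ) {a : ℝ}
    {c : ℕ} (ha : 0 ≤ a) (hw : ∀ i ∈ s, c * w i ≤ a) (hν : ∑ i ∈ s, ν i ≤ c) :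
    ∑ i ∈ s, w i * ν i ≤ a := by
  rcases Nat.eq_zero_or_pos c with rfl | hc
  · have hzero : ∀ i ∈ s, ν i = 0 := sum_eq_zero_iff.mp (Nat.le_zero.mp hν)
    rw [sum_eq_zero fun i hi => by simp [hzero i hi]]
    exact ha
  · have hνR : ∑ i ∈ s, (ν i : ℝ) ≤ c := by exact_mod_cast hν
    refine le_of_mul_le_mul_left ?_ (Nat.cast_pos.mpr hc)
    calc (c : ℝ) * ∑ i ∈ s, w i * ν i = ∑ i ∈ s, (ν i : ℝ) * (c * w i) := by
          rw [mul_sum]; exact sum_congr rfl fun i _ => by ring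
      _ ≤ ∑ i ∈ s, (ν i : ℝ) * a :=
          sum_le_sum fun i hi => mul_le_mul_of_nonneg_left (hw i hi) (Nat.cast_nonneg _)
      _ = (∑ i ∈ s, (ν i : ℝ)) * a := (sum_mul ..).symm
      _ ≤ c * a := mul_le_mul_of_nonneg_right hνR ha

section Weights

variable {n : ℕ} {ω : Fin n → ℝ} {c : ℕ}

lemma nonneg_of_mul_le_succ (hfirst : ∀ i : Fin n, i.val = 0 → 0 ≤ ω i)
    (hchain : ∀ i j : Fin n, j.val = i.val + 1 → c * ω i ≤ ω j) (i : Fin n) : 0 ≤ ω i := by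
  obtain ⟨v, hv⟩ := i
  induction v with
  | zero => exact hfirst _ rfl
  | succ v ih =>
    exact (mul_nonneg (Nat.cast_nonneg c) (ih (by omega))).trans (hchain ⟨v, by omega⟩ _ rfl)

lemma mul_le_of_lt_of_mul_le_succ (hω : ∀ i, 0 ≤ ω i)
    (hchain : ∀ i j : Fin n, j.val = i.val + 1 → c * ω i ≤ ω j) {j k : Fin n} (hjk : j < k) :
    c * ω j ≤ ω k := by
  rcases Nat.eq_zero_or_pos c with rfl | hc
  · simpa using hω k
  obtain ⟨v, hv⟩ := k
  have hjv : j.val + 1 ≤ v := Fin.lt_def.mp hjk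
  induction v, hjv using Nat.le_induction with
  | base => exact hchain _ _ rfl
  | succ v hjv ih =>
    have hv' : v < n := by omega
    calc c * ω j ≤ ω ⟨v, hv'⟩ := ih hv' (Fin.lt_def.mpr hjv)
      _ ≤ c * ω ⟨v, hv'⟩ := le_mul_of_one_le_left (hω _) (by exact_mod_cast hc)
      _ ≤ ω ⟨v + 1, hv⟩ := hchain _ _ rfl

end Weights

theorem wt_le_wt_of_revlexGT {n c : ℕ} {ω : Fin n → ℝ} {ν μ : Fin n → ℕ}
    (hω : ∀ i, 0 ≤ ω i) (hdom : ∀ j k : Fin n, j < k → c * ω j ≤ ω k)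
    (hν : ∑ i, ν i ≤ c) (h : RevlexGT ν μ) : wt ω ν ≤ wt ω μ := by
  obtain ⟨k, hk, hafter⟩ := h
  set f : Fin n → ℝ := fun i => ω i * ((μ i : ℝ) - ν i)
  have hdiff : wt ω μ - wt ω ν = f k + ∑ i ∈ Iio k, f i := by
    have hout : ∀ i ∉ Iic k, f i = 0 := fun i hi => by
      simp [f, hafter i (not_le.mp (mem_Iic.not.mp hi))]
    have hwt : wt ω μ - wt ω ν = ∑ i, f i := by
      simp only [wt, f, mul_sub, sum_sub_distrib]
    rw [hwt, ← sum_subset (subset_univ (Iic k)) fun i _ hi => hout i hi, ← Iio_insert,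
      sum_insert notMem_Iio_self]
  have hfk : ω k ≤ f k := by
    have hνμ : (ν k : ℝ) + 1 ≤ μ k := by exact_mod_cast hk
    nlinarith [hω k]
  have hbelow : ∑ i ∈ Iio k, ω i * ν i ≤ ω k :=
    sum_mul_natCast_le _ _ _ (hω k) (fun i hi => hdom i k (mem_Iio.mp hi))
      ((sum_le_sum_of_subset (subset_univ _)).trans hν)
  have hrest : -∑ i ∈ Iio k, ω i * ν i ≤ ∑ i ∈ Iio k, f i := by
    rw [← sum_neg_distrib]
    exact sum_le_sum fun i _ => by nlinarith [hω i, (Nat.cast_nonneg (μ i) : (0 : ℝ) ≤ μ i)]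
  linarith

theorem stmt8_general {n m : ℕ} (c : ℕ) (ω : Fin n → ℝ)
    (hzero : ∀ i : Fin n, i.val ≤ n - m → ω i = 0)
    (hgrow : ∀ i j : Fin n, n - m ≤ i.val → j.val = i.val + 1 → (c : ℝ) * ω i < ω j) :
    ∀ t : ℕ, t ≤ c → ∀ ν μ : Fin n → ℕ, (∑ i, ν i) = t → (∑ i, μ i) = t →
      (RevlexGT ν μ ↔
        (wt ω ν < wt ω μ ∨ (wt ω ν = wt ω μ ∧ RevlexGT ν μ))) := by
  intro t ht ν μ hν hμ
  have hchain : ∀ i j : Fin n, j.val = i.val + 1 → c * ω i ≤ ω j := fun i j hij => by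
    by_cases hj : j.val ≤ n - m
    · simp [hzero i (by omega), hzero j hj]
    · exact (hgrow i j (by omega) hij).le
  have hω := nonneg_of_mul_le_succ (fun i hi => (hzero i (by omega)).ge) hchain
  have key : ∀ {ν μ : Fin n → ℕ}, ∑ i, ν i = t → RevlexGT ν μ → wt ω ν ≤ wt ω μ :=
    fun hν h => wt_le_wt_of_revlexGT hω (fun _ _ => mul_le_of_lt_of_mul_le_succ hω hchain)
      (hν ▸ ht) h
  constructor
  · intro h
    exact (key hν h).lt_or_eq.imp_right fun e => ⟨e, h⟩
  · rintro (hlt | ⟨-, h⟩)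
    · have hne : ν ≠ μ := by rintro rfl; exact lt_irrefl _ hlt
      exact (revlexGT_or_revlexGT_of_ne hne).resolve_right fun h => (key hμ h).not_gt hlt
    · exact h

/-- for `ω` with `0 = ω_1 = … = ω_{n-m+1}` and `c·ω_i < ω_{i+1}` for
`i = n-m+1, …, n-1`, the reverse lexicographic order `≻` and its refinement `≻_ω`
(compare first by minimal `ω`-weight, break ties by `≻`) agree on monomials of any
total degree `t ≤ c`. -/
theorem stmt8 {n m : ℕ} (hm : 0 < m) (hmn : m < n) (c : ℕ) (ω : Fin n → ℝ)
    (hzero : ∀ i : Fin n, i.val ≤ n - m → ω i = 0)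
    (hgrow : ∀ i j : Fin n, n - m ≤ i.val → j.val = i.val + 1 → (c : ℝ) * ω i < ω j) :
    ∀ t : ℕ, t ≤ c → ∀ ν μ : Fin n → ℕ, (∑ i, ν i) = t → (∑ i, μ i) = t →
      (RevlexGT ν μ ↔
        (wt ω ν < wt ω μ ∨ (wt ω ν = wt ω μ ∧ RevlexGT ν μ))) :=
  stmt8_general c ω hzero hgrow
end

section
/- Let ν, μ ∈ N^n with |ν| = |μ| = t, let k be the largest index with ν_k ≠ μ_k, assume ν_k < μ_k and ν_j = μ_j = 0 for j > k. Let ω ∈ R^n satisfy 0 ≤ ω_1 ≤ ... ≤ ω_n with c·ω_{k−1} < ω_k, where t ≤ c. Then ω·ν < ω·μ. -/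
/-!
Apart from `ν_k`, the whole mass `t - ν_k ≤ c` of `ν` sits at indices below `k`, where the weights
are at most `ω_{k-1}`. Hence `ω·ν ≤ c·ω_{k-1} + ω_k ν_k < ω_k (ν_k + 1) ≤ ω_k μ_k ≤ ω·μ`.
-/

open Finset

theorem sum_mul_le_of_eq_zero_of_lt {ι R : Type*} [Fintype ι] [LinearOrder ι] [Ring R]
    [PartialOrder R] [IsOrderedRing R] {ω ν : ι → R} {K : ι} {w : R} (hν : 0 ≤ ν)
    (hvanish : ∀ i, K < i → ν i = 0) (hw : ∀ i < K, ω i ≤ w) :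
    ∑ i, ω i * ν i ≤ w * (∑ i, ν i - ν K) + ω K * ν K := by
  have hle : ∀ i ∈ univ.erase K, ω i * ν i ≤ w * ν i := by
    intro i hi
    rcases lt_or_gt_of_ne (ne_of_mem_erase hi) with hlt | hgt
    · exact mul_le_mul_of_nonneg_right (hw i hlt) (hν i)
    · simp [hvanish i hgt]
  rw [← add_sum_erase _ _ (mem_univ K), ← add_sum_erase _ ν (mem_univ K), add_sub_cancel_left,
    mul_sum, add_comm]
  exact add_le_add_left (sum_le_sum hle) _

/-- the weight-comparison inequality. If `ν, μ` have equal total degree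
`t ≤ c`, vanish beyond index `k`, `ν_k < μ_k`, and `ω` is a nonnegative nondecreasing
weight vector with `c·ω_{k-1} < ω_k`, then `ω · ν < ω · μ`. -/
theorem stmt9 {n : ℕ} (t c : ℕ) (htc : t ≤ c) (ν μ : Fin n → ℕ)
    (hν : (∑ i, ν i) = t)
    (k : ℕ) (hk : k < n)
    (hvanish : ∀ j : Fin n, k < j.val → ν j = 0 ∧ μ j = 0)
    (hdiff : ν ⟨k, hk⟩ < μ ⟨k, hk⟩)
    (ω : Fin n → ℝ) (hnn : ∀ i, 0 ≤ ω i)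
    (hmono : ∀ i j : Fin n, i ≤ j → ω i ≤ ω j)
    (hcw : (c : ℝ) * ω ⟨k - 1, by omega⟩ < ω ⟨k, hk⟩) :
    ∑ i, ω i * (ν i : ℝ) < ∑ i, ω i * (μ i : ℝ) := by
  set K : Fin n := ⟨k, hk⟩
  set K' : Fin n := ⟨k - 1, by omega⟩
  have hν_le : ∑ i, ω i * (ν i : ℝ) ≤ ω K' * ((t : ℝ) - ν K) + ω K * ν K := by
    have := sum_mul_le_of_eq_zero_of_lt (ω := ω) (ν := fun i ↦ (ν i : ℝ)) (K := K) (w := ω K')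
      (fun i ↦ Nat.cast_nonneg _) (fun i hi ↦ by simp [(hvanish i hi).1])
      (fun i (hi : i.val < k) ↦ hmono i K' (show i.val ≤ k - 1 by omega))
    rwa [← Nat.cast_sum, hν] at this
  have hμ_ge : ω K * μ K ≤ ∑ i, ω i * (μ i : ℝ) :=
    single_le_sum (f := fun i ↦ ω i * (μ i : ℝ)) (fun i _ ↦ by have := hnn i; positivity)
      (mem_univ K)
  have htc' : (t : ℝ) - ν K ≤ c := by
    have : (t : ℝ) ≤ c := by exact_mod_cast htc
    linarith [(Nat.cast_nonneg (ν K) : (0 : ℝ) ≤ _)]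
  have hdiff' : (ν K : ℝ) + 1 ≤ μ K := by exact_mod_cast hdiff
  calc ∑ i, ω i * (ν i : ℝ) ≤ ω K' * ((t : ℝ) - ν K) + ω K * ν K := hν_le
    _ ≤ c * ω K' + ω K * ν K := by linarith [mul_le_mul_of_nonneg_left htc' (hnn K')]
    _ < ω K * (ν K + 1) := by linarith
    _ ≤ ω K * μ K := mul_le_mul_of_nonneg_left hdiff' (hnn K)
    _ ≤ ∑ i, ω i * (μ i : ℝ) := hμ_ge
end

section
/- Let I ⊂ K[x_1,...,x_n] be a graded ideal, ω, ω′ ∈ R^n, ≻ a term order, and G the reduced Gröbner basis of I with respect to the refinement ≻_ω. If in_ω(f) = in_{ω′}(f) for every f ∈ G, then in_ω(I) = in_{ω′}(I). -/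
/-- The `ω`-weight of an exponent vector. -/
noncomputable def wtF {n : ℕ} (ω : Fin n → ℝ) (ν : Fin n →₀ ℕ) : ℝ :=
  ∑ i, ω i * (ν i : ℝ)

open scoped Classical in
/-- The initial form `in_ω(f)`: the sum of the terms of `f` of minimal `ω`-weight. -/
noncomputable def initialForm {n : ℕ} {K : Type*} [CommRing K] (ω : Fin n → ℝ)
    (f : MvPolynomial (Fin n) K) : MvPolynomial (Fin n) K :=
  ∑ ν ∈ f.support.filter (fun ν => ∀ μ ∈ f.support, wtF ω ν ≤ wtF ω μ),
    MvPolynomial.monomial ν (f.coeff ν)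

/-- The initial ideal `in_ω(I) = (in_ω(f) : f ∈ I)`. -/
noncomputable def initialIdealW {n : ℕ} {K : Type*} [CommRing K] (ω : Fin n → ℝ)
    (I : Ideal (MvPolynomial (Fin n) K)) : Ideal (MvPolynomial (Fin n) K) :=
  Ideal.span {p | ∃ f ∈ I, p = initialForm ω f}

/-- `ν` is the leading exponent of `f` with respect to the strict order `r`
("`r ν μ`" meaning "`x^ν ≻ x^μ`"). -/
def LeadSpec {n : ℕ} {K : Type*} [CommRing K]
    (r : (Fin n →₀ ℕ) → (Fin n →₀ ℕ) → Prop)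
    (f : MvPolynomial (Fin n) K) (ν : Fin n →₀ ℕ) : Prop :=
  ν ∈ f.support ∧ ∀ μ ∈ f.support, μ ≠ ν → r ν μ

/-- The initial ideal of `I` with respect to a term order `r`: generated by the leading
terms of the elements of `I`. -/
noncomputable def initialIdealR {n : ℕ} {K : Type*} [CommRing K]
    (r : (Fin n →₀ ℕ) → (Fin n →₀ ℕ) → Prop)
    (I : Ideal (MvPolynomial (Fin n) K)) : Ideal (MvPolynomial (Fin n) K) :=
  Ideal.span {p | ∃ f ∈ I, ∃ ν, LeadSpec r f ν ∧ p = MvPolynomial.monomial ν (f.coeff ν)}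

/-- `G` is a Gröbner basis of `I` with respect to the term order `r`. -/
def IsGroebnerBasis {n : ℕ} {K : Type*} [CommRing K]
    (r : (Fin n →₀ ℕ) → (Fin n →₀ ℕ) → Prop)
    (I : Ideal (MvPolynomial (Fin n) K)) (G : Finset (MvPolynomial (Fin n) K)) : Prop :=
  (↑G ⊆ (I : Set (MvPolynomial (Fin n) K))) ∧
  Ideal.span {p | ∃ g ∈ G, ∃ ν, LeadSpec r g ν ∧ p = MvPolynomial.monomial ν (g.coeff ν)}
    = initialIdealR r I

/-- `G` is the reduced Gröbner basis of `I` with respect to `r`: a Gröbner basis whose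
elements are monic and such that no monomial of an element is divisible by the leading
monomial of another element. -/
def IsReducedGroebnerBasis {n : ℕ} {K : Type*} [CommRing K]
    (r : (Fin n →₀ ℕ) → (Fin n →₀ ℕ) → Prop)
    (I : Ideal (MvPolynomial (Fin n) K)) (G : Finset (MvPolynomial (Fin n) K)) : Prop :=
  IsGroebnerBasis r I G ∧
  (∀ g ∈ G, ∀ ν, LeadSpec r g ν → g.coeff ν = 1) ∧
  (∀ g ∈ G, ∀ g' ∈ G, g ≠ g' → ∀ ν ∈ g.support, ∀ ν', LeadSpec r g' ν' → ¬ ν' ≤ ν)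

/-- `r` is a term order (written with the "larger/leading" element first). -/
structure IsTermOrder (n : ℕ) (r : (Fin n →₀ ℕ) → (Fin n →₀ ℕ) → Prop) : Prop where
  trans : ∀ a b c, r a b → r b c → r a c
  irrefl : ∀ a, ¬ r a a
  total : ∀ a b, a ≠ b → r a b ∨ r b a
  add_right : ∀ a b c, r a b → r (a + c) (b + c)
  gt_zero : ∀ a, a ≠ 0 → r a 0

/-- The refinement `≻_ω` of a term order `≻` by `ω`: compare first by `ω`-weight
(minimal weight is leading), break ties with `≻`. -/
def refineRel {n : ℕ} (ω : Fin n → ℝ) (r : (Fin n →₀ ℕ) → (Fin n →₀ ℕ) → Prop) :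
    (Fin n →₀ ℕ) → (Fin n →₀ ℕ) → Prop :=
  fun ν μ => wtF ω ν < wtF ω μ ∨ (wtF ω ν = wtF ω μ ∧ r ν μ)

/-!
Work one degree at a time. The degree-`d` part `W` of `I` is finite-dimensional, and `in_ω(I)`
is generated by the spaces `span in_ω(W)`, because a nonzero homogeneous component of an initial
form is the initial form of a homogeneous component. For any weight, `span in_ω(W)` has the same
dimension as `W`: for a tie-breaking strict total order, its leading exponents are those of `W`,
and a finite-dimensional space of polynomials has as many leading exponents as its dimension.
As `G` is a Gröbner basis for `≻_ω`, every `≻_ω`-leading exponent of `W` is that of some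
`x^δ g₀ ∈ W` with `g₀` a homogeneous component of an element of `G`, and `in_ω`, `in_ω'` agree on
`x^δ g₀`. The span of these common initial forms lies in `span in_ω(W)` and in `span in_ω'(W)`
and has dimension at least `dim W`, so the two spans coincide.
-/

open MvPolynomial

theorem wtF_eq_weight {n : ℕ} (ω : Fin n → ℝ) (ν : Fin n →₀ ℕ) :
    wtF ω ν = Finsupp.weight ω ν := by
  simp [wtF, Finsupp.weight_apply, Finsupp.sum_fintype, mul_comm]

theorem wtF_add {n : ℕ} (ω : Fin n → ℝ) (a b : Fin n →₀ ℕ) :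
    wtF ω (a + b) = wtF ω a + wtF ω b := by
  simp only [wtF_eq_weight, map_add]

theorem Finset.exists_forall_rel_of_ne {α : Type*} {rel : α → α → Prop}
    [IsStrictTotalOrder α rel] {s : Finset α} (hs : s.Nonempty) :
    ∃ a ∈ s, ∀ b ∈ s, b ≠ a → rel a b := by
  classical
  let := linearOrderOfSTO rel
  exact ⟨s.min' hs, s.min'_mem hs, fun b hb hne => (s.min'_le b hb).lt_of_ne hne.symm⟩

section Order

variable {n : ℕ} {r : (Fin n →₀ ℕ) → (Fin n →₀ ℕ) → Prop}

theorem IsTermOrder.isStrictTotalOrder (hr : IsTermOrder n r) :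
    IsStrictTotalOrder (Fin n →₀ ℕ) r where
  trichotomous a b hab hba := by_contra fun hne => (hr.total a b hne).elim hab hba
  irrefl := hr.irrefl
  trans := hr.trans

instance refineRel.isStrictTotalOrder (ω : Fin n → ℝ) [IsStrictTotalOrder (Fin n →₀ ℕ) r] :
    IsStrictTotalOrder (Fin n →₀ ℕ) (refineRel ω r) where
  trichotomous a b hab hba := by
    simp only [refineRel, not_or, not_and, not_lt] at hab hba
    have hw : wtF ω a = wtF ω b := le_antisymm hba.1 hab.1
    exact trichotomous_of r a b |>.elim (fun h => absurd h (hab.2 hw))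
      (·.elim id fun h => absurd h (hba.2 hw.symm))
  irrefl a := by rintro (h | ⟨-, h⟩); exacts [lt_irrefl _ h, irrefl a h]
  trans a b c := by
    rintro (h₁ | ⟨e₁, h₁⟩) (h₂ | ⟨e₂, h₂⟩)
    · exact .inl (h₁.trans h₂)
    · exact .inl (e₂ ▸ h₁)
    · exact .inl (e₁ ▸ h₂)
    · exact .inr ⟨e₁.trans e₂, _root_.trans h₁ h₂⟩

theorem refineRel_add_right {ω : Fin n → ℝ} (hr : IsTermOrder n r) {a b : Fin n →₀ ℕ}
    (c : Fin n →₀ ℕ) (h : refineRel ω r a b) : refineRel ω r (a + c) (b + c) := by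
  simp only [refineRel, wtF_add] at h ⊢
  rcases h with h | ⟨e, h⟩
  · exact .inl (by linarith)
  · exact .inr ⟨by rw [e], hr.add_right _ _ _ h⟩

end Order

section Lead

variable {n : ℕ} {K : Type*} [Field K] {rel : (Fin n →₀ ℕ) → (Fin n →₀ ℕ) → Prop}

theorem exists_leadSpec [IsStrictTotalOrder (Fin n →₀ ℕ) rel] {f : MvPolynomial (Fin n) K}
    (hf : f ≠ 0) : ∃ ν, LeadSpec rel f ν :=
  (Finset.exists_forall_rel_of_ne (support_nonempty.2 hf)).imp fun _ => id

theorem LeadSpec.mono {f g : MvPolynomial (Fin n) K} {ν : Fin n →₀ ℕ} (h : LeadSpec rel f ν)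
    (hν : ν ∈ g.support) (hgf : g.support ⊆ f.support) : LeadSpec rel g ν :=
  ⟨hν, fun μ hμ => h.2 μ (hgf hμ)⟩

theorem support_monomial_one_mul (δ : Fin n →₀ ℕ) (f : MvPolynomial (Fin n) K) :
    (monomial δ 1 * f).support = f.support.map (addLeftEmbedding δ) :=
  AddMonoidAlgebra.support_coeff_single_mul f 1 (by simp) δ

theorem LeadSpec.monomial_mul (hadd : ∀ a b c, rel a b → rel (a + c) (b + c))
    {f : MvPolynomial (Fin n) K} {ν : Fin n →₀ ℕ} (h : LeadSpec rel f ν) (δ : Fin n →₀ ℕ) :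
    LeadSpec rel (monomial δ 1 * f) (δ + ν) := by
  refine ⟨by simpa [support_monomial_one_mul] using h.1, ?_⟩
  rw [support_monomial_one_mul, Finset.forall_mem_map]
  intro μ hμ hne
  rw [addLeftEmbedding_apply, add_comm δ, add_comm δ]
  exact hadd _ _ _ (h.2 μ hμ fun e => hne (e ▸ rfl))

end Lead

section Dimension

variable {n : ℕ} {K : Type*} [Field K]

def leadsSet (rel : (Fin n →₀ ℕ) → (Fin n →₀ ℕ) → Prop)
    (V : Submodule K (MvPolynomial (Fin n) K)) : Set (Fin n →₀ ℕ) :=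
  {ν | ∃ f ∈ V, LeadSpec rel f ν}

variable {rel : (Fin n →₀ ℕ) → (Fin n →₀ ℕ) → Prop} {S : Set (Fin n →₀ ℕ)}
  {V : Submodule K (MvPolynomial (Fin n) K)}

theorem leadsSet_subset (hV : V ≤ restrictSupport K S) : leadsSet rel V ⊆ S :=
  fun _ ⟨_, hf, hν⟩ => (mem_restrictSupport_iff K).1 (hV hf) hν.1

theorem finiteDimensional_of_le_restrictSupport (hS : S.Finite) (hV : V ≤ restrictSupport K S) :
    FiniteDimensional K V :=
  have : Finite S := hS.to_subtype
  have := (basisRestrictSupport K S).finiteDimensional_of_finite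
  Submodule.finiteDimensional_of_le hV

variable [IsStrictTotalOrder (Fin n →₀ ℕ) rel]

theorem finrank_le_ncard_leadsSet (hS : S.Finite) (hV : V ≤ restrictSupport K S) :
    Module.finrank K V ≤ (leadsSet rel V).ncard := by
  have := finiteDimensional_of_le_restrictSupport hS hV
  have hL : (leadsSet rel V).Finite := hS.subset (leadsSet_subset hV)
  let L := hL.toFinset
  let φ : V →ₗ[K] (L → K) := LinearMap.pi fun ν => (lcoeff K ν.1).comp V.subtype
  -- an element of `V` vanishing at all leading exponents of `V` has no leading exponent
  have hφ : Function.Injective φ := by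
    rw [← LinearMap.ker_eq_bot, Submodule.eq_bot_iff]
    intro f hf
    by_contra hne
    obtain ⟨ν, hν⟩ := exists_leadSpec (rel := rel) (f := f.1) (by simpa using hne)
    exact mem_support_iff.1 hν.1 (congr_fun hf ⟨ν, hL.mem_toFinset.2 ⟨f, f.2, hν⟩⟩)
  calc Module.finrank K V ≤ Module.finrank K (L → K) :=
        LinearMap.finrank_le_finrank_of_injective hφ
    _ = (leadsSet rel V).ncard := by
        simp [L, Set.ncard_eq_toFinset_card _ hL]

theorem linearIndepOn_of_leadSpec {f : (Fin n →₀ ℕ) → MvPolynomial (Fin n) K}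
    {L : Set (Fin n →₀ ℕ)} (hf : ∀ ν ∈ L, LeadSpec rel (f ν) ν) : LinearIndepOn K f L := by
  classical
  rw [linearIndepOn_iff]
  intro l hl hsum
  by_contra hne
  -- the coefficient at the leading exponent among those of `l` sees only one summand
  obtain ⟨ν, hν, hmax⟩ :=
    Finset.exists_forall_rel_of_ne (rel := rel) (Finsupp.support_nonempty_iff.2 hne)
  have hcoeff : coeff ν (Finsupp.linearCombination K f l) = l ν * coeff ν (f ν) := by
    rw [Finsupp.linearCombination_apply, Finsupp.sum, coeff_sum, Finset.sum_eq_single ν]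
    · simp
    · intro μ hμ hμν
      have hνμ : ν ∉ (f μ).support := fun h =>
        asymm (hmax μ hμ hμν) ((hf μ (hl hμ)).2 ν h (Ne.symm hμν))
      simp [notMem_support_iff.1 hνμ]
    · intro h
      simp [Finsupp.notMem_support_iff.1 h]
  rw [hsum, coeff_zero] at hcoeff
  exact mul_ne_zero (Finsupp.mem_support_iff.1 hν) (mem_support_iff.1 (hf ν (hl hν)).1)
    hcoeff.symm

theorem ncard_leadsSet_le_finrank (hS : S.Finite) (hV : V ≤ restrictSupport K S) :
    (leadsSet rel V).ncard ≤ Module.finrank K V := by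
  have := finiteDimensional_of_le_restrictSupport hS hV
  have := (hS.subset (leadsSet_subset (rel := rel) hV)).fintype
  choose! f hfV hf using fun ν (h : ν ∈ leadsSet rel V) => h
  let v : leadsSet rel V → V := fun ν => ⟨f ν, hfV ν ν.2⟩
  have hv : LinearIndependent K v :=
    LinearIndependent.of_comp V.subtype (linearIndepOn_of_leadSpec hf)
  rw [Set.ncard_eq_toFinset_card', Set.toFinset_card]
  exact hv.fintype_card_le_finrank

end Dimension

section InitialForm

variable {n : ℕ} {K : Type*} [Field K] {ω : Fin n → ℝ}

theorem coeff_initialForm (ω : Fin n → ℝ) (f : MvPolynomial (Fin n) K) (μ : Fin n →₀ ℕ) :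
    coeff μ (initialForm ω f) =
      if ∀ τ ∈ f.support, wtF ω μ ≤ wtF ω τ then coeff μ f else 0 := by
  classical
  simp only [initialForm, coeff_sum, coeff_monomial, Finset.sum_ite_eq', Finset.mem_filter]
  by_cases hμ : μ ∈ f.support <;> simp_all

@[simp]
theorem initialForm_zero (ω : Fin n → ℝ) : initialForm ω (0 : MvPolynomial (Fin n) K) = 0 := by
  simp [initialForm]

theorem support_initialForm_subset (ω : Fin n → ℝ) (f : MvPolynomial (Fin n) K) :
    (initialForm ω f).support ⊆ f.support := fun μ hμ => by
  rw [mem_support_iff, coeff_initialForm] at hμ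
  split_ifs at hμ
  exacts [mem_support_iff.2 hμ, absurd rfl hμ]

theorem initialForm_eq_weightedHomogeneousComponent {f : MvPolynomial (Fin n) K}
    {x : Fin n →₀ ℕ} (hx : x ∈ f.support) (hmin : ∀ μ ∈ f.support, wtF ω x ≤ wtF ω μ) :
    initialForm ω f = weightedHomogeneousComponent ω (wtF ω x) f := by
  classical
  ext μ
  rw [coeff_initialForm, coeff_weightedHomogeneousComponent, ← wtF_eq_weight]
  by_cases hμ : μ ∈ f.support
  · refine if_congr ⟨fun h => le_antisymm (h x hx) (hmin μ hμ), fun h τ hτ => ?_⟩ rfl rfl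
    exact h ▸ hmin τ hτ
  · simp [notMem_support_iff.1 hμ]

theorem initialForm_monomial_one_mul (δ : Fin n →₀ ℕ) (f : MvPolynomial (Fin n) K) :
    initialForm ω (monomial δ 1 * f) = monomial δ 1 * initialForm ω f := by
  ext μ
  by_cases hδ : δ ≤ μ
  · obtain ⟨μ, rfl⟩ := exists_add_of_le hδ
    rw [coeff_monomial_mul, one_mul, coeff_initialForm, coeff_initialForm, coeff_monomial_mul,
      one_mul, support_monomial_one_mul]
    exact if_congr (by simp [wtF_add]) rfl rfl
  · rw [coeff_monomial_mul', if_neg hδ, coeff_initialForm, coeff_monomial_mul', if_neg hδ,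
      ite_self]

theorem homogeneousComponent_initialForm {f : MvPolynomial (Fin n) K} {d : ℕ}
    (h : homogeneousComponent d (initialForm ω f) ≠ 0) :
    homogeneousComponent d (initialForm ω f) = initialForm ω (homogeneousComponent d f) := by
  classical
  obtain ⟨x, hx, hmin⟩ := Finset.exists_min_image f.support (wtF ω)
    (support_nonempty.2 fun hf => h (by simp [hf]))
  have hcomm : homogeneousComponent d (weightedHomogeneousComponent ω (wtF ω x) f) =
      weightedHomogeneousComponent ω (wtF ω x) (homogeneousComponent d f) := by
    ext μ
    simp only [coeff_homogeneousComponent, coeff_weightedHomogeneousComponent]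
    split_ifs <;> rfl
  rw [initialForm_eq_weightedHomogeneousComponent hx hmin, hcomm] at h ⊢
  obtain ⟨y, hy⟩ := support_nonempty.2 h
  rw [support_weightedHomogeneousComponent, Finset.mem_filter, ← wtF_eq_weight] at hy
  have hsub : (homogeneousComponent d f).support ⊆ f.support := by
    simp [support_homogeneousComponent]
  rw [initialForm_eq_weightedHomogeneousComponent hy.1 (fun μ hμ => hy.2 ▸ hmin μ (hsub hμ)),
    hy.2]

variable {r : (Fin n →₀ ℕ) → (Fin n →₀ ℕ) → Prop}

theorem LeadSpec.wtF_le {f : MvPolynomial (Fin n) K} {ν : Fin n →₀ ℕ}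
    (h : LeadSpec (refineRel ω r) f ν) : ∀ μ ∈ f.support, wtF ω ν ≤ wtF ω μ := by
  intro μ hμ
  by_cases hμν : μ = ν
  · rw [hμν]
  · rcases h.2 μ hμ hμν with hlt | ⟨heq, -⟩
    exacts [hlt.le, heq.le]

theorem LeadSpec.initialForm {f : MvPolynomial (Fin n) K} {ν : Fin n →₀ ℕ}
    (h : LeadSpec (refineRel ω r) f ν) : LeadSpec (refineRel ω r) (initialForm ω f) ν :=
  h.mono (by rw [mem_support_iff, coeff_initialForm, if_pos h.wtF_le]; exact mem_support_iff.1 h.1)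
    (support_initialForm_subset ω f)

end InitialForm

section SpanInitialForm

variable {n : ℕ} {K : Type*} [Field K] {ω ω' : Fin n → ℝ} {S : Set (Fin n →₀ ℕ)}
  {W : Submodule K (MvPolynomial (Fin n) K)}

variable (ω) in
noncomputable def initialSpan (W : Submodule K (MvPolynomial (Fin n) K)) :
    Submodule K (MvPolynomial (Fin n) K) :=
  Submodule.span K (initialForm ω '' W)

theorem initialSpan_le_restrictSupport (hW : W ≤ restrictSupport K S) :
    initialSpan ω W ≤ restrictSupport K S :=
  Submodule.span_le.2 fun _ ⟨f, hf, hp⟩ =>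
    hp ▸ (Finset.coe_subset.2 (support_initialForm_subset ω f)).trans (hW hf)

theorem exists_weightedHomogeneousComponent_eq_of_mem_initialSpan {a : MvPolynomial (Fin n) K}
    (ha : a ∈ initialSpan ω W) (w : ℝ) :
    ∃ g ∈ W, (∀ μ ∈ g.support, w ≤ wtF ω μ) ∧
      weightedHomogeneousComponent ω w g = weightedHomogeneousComponent ω w a := by
  classical
  let Wge := W ⊓ restrictSupport K {μ | w ≤ wtF ω μ}
  suffices initialSpan ω W ≤
      (Wge.map (weightedHomogeneousComponent ω w)).comap (weightedHomogeneousComponent ω w) by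
    obtain ⟨g, ⟨hgW, hgw⟩, hg⟩ := this ha
    exact ⟨g, hgW, hgw, hg⟩
  rw [initialSpan, Submodule.span_le]
  rintro _ ⟨f, hf, rfl⟩
  rcases eq_or_ne f 0 with rfl | hf0
  · rw [initialForm_zero]
    exact zero_mem _
  obtain ⟨x, hx, hmin⟩ := Finset.exists_min_image f.support (wtF ω) (support_nonempty.2 hf0)
  rw [SetLike.mem_coe, Submodule.mem_comap, initialForm_eq_weightedHomogeneousComponent hx hmin,
    weightedHomogeneousComponent_of_mem (weightedHomogeneousComponent_mem _ _ _)]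
  split_ifs with hw
  · exact ⟨f, ⟨hf, fun μ hμ => hw ▸ hmin μ hμ⟩, hw ▸ rfl⟩
  · exact zero_mem _

variable {r : (Fin n →₀ ℕ) → (Fin n →₀ ℕ) → Prop}

theorem leadsSet_initialSpan_subset :
    leadsSet (refineRel ω r) (initialSpan ω W) ⊆ leadsSet (refineRel ω r) W := by
  classical
  rintro ν ⟨a, ha, hν⟩
  obtain ⟨g, hgW, hgw, hg⟩ := exists_weightedHomogeneousComponent_eq_of_mem_initialSpan ha (wtF ω ν)
  have hcoeff : ∀ μ, wtF ω μ = wtF ω ν → coeff μ g = coeff μ a := fun μ hμ => by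
    simpa [coeff_weightedHomogeneousComponent, ← wtF_eq_weight, hμ] using congr(coeff μ $hg)
  refine ⟨g, hgW, mem_support_iff.2 (hcoeff ν rfl ▸ mem_support_iff.1 hν.1), fun μ hμ hne => ?_⟩
  rcases (hgw μ hμ).lt_or_eq with hlt | heq
  · exact .inl hlt
  · exact hν.2 μ (mem_support_iff.2 (hcoeff μ heq.symm ▸ mem_support_iff.1 hμ)) hne

theorem finrank_initialSpan_le (hS : S.Finite) (hW : W ≤ restrictSupport K S) :
    Module.finrank K (initialSpan ω W) ≤ Module.finrank K W := by
  -- any strict total order can break the ties of the `ω`-weight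
  let r : (Fin n →₀ ℕ) → (Fin n →₀ ℕ) → Prop := WellOrderingRel
  calc Module.finrank K (initialSpan ω W)
      ≤ (leadsSet (refineRel ω r) (initialSpan ω W)).ncard :=
        finrank_le_ncard_leadsSet hS (initialSpan_le_restrictSupport hW)
    _ ≤ (leadsSet (refineRel ω r) W).ncard :=
        Set.ncard_le_ncard leadsSet_initialSpan_subset (hS.subset (leadsSet_subset hW))
    _ ≤ Module.finrank K W := ncard_leadsSet_le_finrank hS hW

theorem initialSpan_eq_of_forall_leadSpec [IsStrictTotalOrder (Fin n →₀ ℕ) r]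
    (hS : S.Finite) (hW : W ≤ restrictSupport K S)
    (hE : ∀ f ∈ W, ∀ ν, LeadSpec (refineRel ω r) f ν →
      ∃ q ∈ W, initialForm ω q = initialForm ω' q ∧ LeadSpec (refineRel ω r) q ν) :
    initialSpan ω W = initialSpan ω' W := by
  set E : Set (MvPolynomial (Fin n) K) := {q ∈ W | initialForm ω q = initialForm ω' q}
  set T := Submodule.span K (initialForm ω '' E)
  have hEW : E ⊆ W := fun _ hq => hq.1
  have hTA : T ≤ initialSpan ω W := Submodule.span_mono (Set.image_mono hEW)
  have hTB : T ≤ initialSpan ω' W := by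
    have hT : T = Submodule.span K (initialForm ω' '' E) :=
      congrArg (Submodule.span K) (Set.image_congr fun q (hq : q ∈ E) => hq.2)
    rw [hT]
    exact Submodule.span_mono (Set.image_mono hEW)
  have hTS : T ≤ restrictSupport K S := hTA.trans (initialSpan_le_restrictSupport hW)
  have hleads : leadsSet (refineRel ω r) W ⊆ leadsSet (refineRel ω r) T :=
    fun ν ⟨f, hf, hν⟩ =>
      have ⟨q, hqW, hq, hqν⟩ := hE f hf ν hν
      ⟨initialForm ω q, Submodule.subset_span ⟨q, ⟨hqW, hq⟩, rfl⟩, hqν.initialForm⟩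
  have hWT : Module.finrank K W ≤ Module.finrank K T :=
    calc Module.finrank K W ≤ (leadsSet (refineRel ω r) W).ncard :=
          finrank_le_ncard_leadsSet hS hW
      _ ≤ (leadsSet (refineRel ω r) T).ncard :=
          Set.ncard_le_ncard hleads (hS.subset (leadsSet_subset hTS))
      _ ≤ Module.finrank K T := ncard_leadsSet_le_finrank hS hTS
  have := finiteDimensional_of_le_restrictSupport hS
    (initialSpan_le_restrictSupport (ω := ω) hW)
  have := finiteDimensional_of_le_restrictSupport hS
    (initialSpan_le_restrictSupport (ω := ω') hW)
  rw [← Submodule.eq_of_le_of_finrank_le hTA ((finrank_initialSpan_le hS hW).trans hWT),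
    ← Submodule.eq_of_le_of_finrank_le hTB ((finrank_initialSpan_le hS hW).trans hWT)]

end SpanInitialForm

section HomogeneousPart

variable {n : ℕ} {K : Type*} [Field K] {I : Ideal (MvPolynomial (Fin n) K)}

variable (I) in
noncomputable def homogeneousPart (d : ℕ) : Submodule K (MvPolynomial (Fin n) K) :=
  I.restrictScalars K ⊓ homogeneousSubmodule (Fin n) K d

theorem homogeneousPart_le_restrictSupport (d : ℕ) :
    homogeneousPart I d ≤ restrictSupport K {ν | ν.degree = d} :=
  inf_le_right.trans (homogeneousSubmodule_eq_finsupp_supported (Fin n) K d).le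

theorem IsGroebnerBasis.exists_leadSpec_le {rel : (Fin n →₀ ℕ) → (Fin n →₀ ℕ) → Prop}
    {G : Finset (MvPolynomial (Fin n) K)} (hG : IsGroebnerBasis rel I G)
    (hmonic : ∀ g ∈ G, ∀ ν, LeadSpec rel g ν → g.coeff ν = 1) {f : MvPolynomial (Fin n) K}
    (hf : f ∈ I) {ν : Fin n →₀ ℕ} (hν : LeadSpec rel f ν) :
    ∃ g ∈ G, ∃ ν₀ ≤ ν, LeadSpec rel g ν₀ := by
  have hgen : {p | ∃ g ∈ G, ∃ ν, LeadSpec rel g ν ∧ p = monomial ν (g.coeff ν)} =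
      (monomial · 1) '' {ν₀ | ∃ g ∈ G, LeadSpec rel g ν₀} := by
    ext p
    constructor
    · rintro ⟨g, hg, ν₀, hν₀, rfl⟩
      exact ⟨ν₀, ⟨g, hg, hν₀⟩, by rw [hmonic g hg ν₀ hν₀]⟩
    · rintro ⟨ν₀, ⟨g, hg, hν₀⟩, rfl⟩
      exact ⟨g, hg, ν₀, hν₀, by rw [hmonic g hg ν₀ hν₀]⟩
  have hmem : monomial ν (f.coeff ν) ∈ initialIdealR rel I :=
    Ideal.subset_span ⟨f, hf, ν, hν, rfl⟩
  rw [← hG.2, hgen, mem_ideal_span_monomial_image] at hmem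
  obtain ⟨ν₀, ⟨g, hg, hν₀⟩, hle⟩ := hmem ν (by simp [mem_support_iff.1 hν.1])
  exact ⟨g, hg, ν₀, hle, hν₀⟩

variable {ω ω' : Fin n → ℝ} {r : (Fin n →₀ ℕ) → (Fin n →₀ ℕ) → Prop}

/-- The witness is `x^(ν - ν₀) g₀`, where `g ∈ G` has leading exponent `ν₀ ≤ ν` and `g₀` is the
homogeneous component of `g` of degree `|ν₀|`. -/
theorem exists_leadSpec_initialForm_eq
    (hgraded : ∀ p ∈ I, ∀ d : ℕ, homogeneousComponent d p ∈ I) (hr : IsTermOrder n r)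
    {G : Finset (MvPolynomial (Fin n) K)} (hG : IsGroebnerBasis (refineRel ω r) I G)
    (hmonic : ∀ g ∈ G, ∀ ν, LeadSpec (refineRel ω r) g ν → g.coeff ν = 1)
    (h : ∀ g ∈ G, initialForm ω g = initialForm ω' g) {d : ℕ} {f : MvPolynomial (Fin n) K}
    (hf : f ∈ homogeneousPart I d) {ν : Fin n →₀ ℕ} (hν : LeadSpec (refineRel ω r) f ν) :
    ∃ q ∈ homogeneousPart I d, initialForm ω q = initialForm ω' q ∧
      LeadSpec (refineRel ω r) q ν := by
  obtain ⟨g, hgG, ν₀, hle, hν₀⟩ := hG.exists_leadSpec_le hmonic hf.1 hν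
  obtain ⟨δ, rfl⟩ := exists_add_of_le hle
  set g₀ := homogeneousComponent ν₀.degree g
  have hg₀ : LeadSpec (refineRel ω r) g₀ ν₀ :=
    hν₀.mono (by simpa [g₀, support_homogeneousComponent] using hν₀.1)
      (by simp [g₀, support_homogeneousComponent])
  have hne : homogeneousComponent ν₀.degree (initialForm ω g) ≠ 0 := fun h0 => by
    have := congr(coeff ν₀ $h0)
    rw [coeff_homogeneousComponent, if_pos rfl, coeff_zero] at this
    exact mem_support_iff.1 hν₀.initialForm.1 this
  have hin : initialForm ω g₀ = initialForm ω' g₀ := by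
    rw [← homogeneousComponent_initialForm hne, h g hgG,
      homogeneousComponent_initialForm (h g hgG ▸ hne)]
  have hdeg : d = δ.degree + ν₀.degree := by
    rw [← map_add, add_comm, Finsupp.degree_eq_weight_one]
    exact (hf.2 (mem_support_iff.1 hν.1)).symm
  refine ⟨monomial δ 1 * g₀, ⟨I.mul_mem_left _ (hgraded g (hG.1 hgG) _), hdeg ▸
      (isHomogeneous_monomial 1 rfl).mul (homogeneousComponent_isHomogeneous _ g)⟩, ?_, ?_⟩
  · rw [initialForm_monomial_one_mul, initialForm_monomial_one_mul, hin]
  · rw [add_comm]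
    exact hg₀.monomial_mul (fun _ _ c => refineRel_add_right hr c) δ

theorem initialIdealW_le_of_initialSpan_le
    (hgraded : ∀ p ∈ I, ∀ d : ℕ, homogeneousComponent d p ∈ I)
    (h : ∀ d, initialSpan ω (homogeneousPart I d) ≤ initialSpan ω' (homogeneousPart I d)) :
    initialIdealW ω I ≤ initialIdealW ω' I := by
  rw [initialIdealW, Ideal.span_le]
  rintro _ ⟨f, hf, rfl⟩
  rw [← sum_homogeneousComponent (initialForm ω f)]
  refine Ideal.sum_mem _ fun d _ => ?_
  by_cases h0 : homogeneousComponent d (initialForm ω f) = 0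
  · rw [h0]
    exact zero_mem _
  rw [homogeneousComponent_initialForm h0]
  have hspan : initialSpan ω' (homogeneousPart I d) ≤ (initialIdealW ω' I).restrictScalars K :=
    Submodule.span_le.2 fun _ ⟨q, hq, hp⟩ => Ideal.subset_span ⟨q, hq.1, hp.symm⟩
  exact hspan (h d (Submodule.subset_span
    ⟨_, ⟨hgraded f hf d, homogeneousComponent_isHomogeneous d f⟩, rfl⟩))

end HomogeneousPart

/-- if `G` is the reduced Gröbner basis of a graded ideal `I` with
respect to `≻_ω` and `in_ω(f) = in_{ω'}(f)` for every `f ∈ G`, then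
`in_ω(I) = in_{ω'}(I)`. -/
theorem stmt12 {n : ℕ} {K : Type*} [Field K] (I : Ideal (MvPolynomial (Fin n) K))
    (hgraded : ∀ p ∈ I, ∀ d : ℕ, MvPolynomial.homogeneousComponent d p ∈ I)
    (ω ω' : Fin n → ℝ) (r : (Fin n →₀ ℕ) → (Fin n →₀ ℕ) → Prop)
    (hr : IsTermOrder n r) (G : Finset (MvPolynomial (Fin n) K))
    (hG : IsReducedGroebnerBasis (refineRel ω r) I G)
    (h : ∀ f ∈ G, initialForm ω f = initialForm ω' f) :
    initialIdealW ω I = initialIdealW ω' I := by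
  have := hr.isStrictTotalOrder
  have hspan : ∀ d, initialSpan ω (homogeneousPart I d) = initialSpan ω' (homogeneousPart I d) :=
    fun d => initialSpan_eq_of_forall_leadSpec (Finsupp.finite_of_degree_eq d)
      (homogeneousPart_le_restrictSupport d)
      fun _ hf _ hν => exists_leadSpec_initialForm_eq hgraded hr hG.1 hG.2.1 h hf hν
  exact le_antisymm (initialIdealW_le_of_initialSpan_le hgraded fun d => (hspan d).le)
    (initialIdealW_le_of_initialSpan_le hgraded fun d => (hspan d).ge)
end
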